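/- arXiv:1612.05818 — 10 statements merged into one kernel-verified Lean document; each statement's English description precedes it below -/
import Mathlib

section
/- Let R be a 6×6 real matrix with the sign pattern T' given by: r11>0, r12>0, r21<0, r22<0, r23>0, r31>0, r34>0, r45>0, r51<0, r52<0, r56>0, r61>0, r62>0, r63>0, r65<0, and all other entries zero. Then the coefficient of t^3 in the characteristic polynomial of R equals -r12·r23·r31 + (r11 + r22)·r56·r65, and the coefficient of t^5 equals -(r11 + r22). -/
open Polynomial Matrix
open scoped Classical

def hasSign {m : Type*} (P M : Matrix m m ℝ) : Prop :=
  ∀ i j, Real.sign (M i j) = P i j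

def patT : Matrix (Fin 6) (Fin 6) ℝ :=
  !![1,1,0,0,0,0; -1,-1,1,0,0,0; 0,0,0,1,0,0; 0,0,0,0,1,0;
     -1,-1,0,0,0,1; 1,1,1,0,-1,0]

def patT' : Matrix (Fin 6) (Fin 6) ℝ :=
  !![1,1,0,0,0,0; -1,-1,1,0,0,0; 1,0,0,1,0,0; 0,0,0,0,1,0;
     -1,-1,0,0,0,1; 1,1,1,0,-1,0]

/-! Only the zero pattern of `T'` matters: `R` has at most fifteen nonzero entries, and
Laplace expansion of `det (t • 1 - R)` along the first row gives the whole characteristic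
polynomial as an explicit polynomial in them. -/

theorem hasSign.apply_eq_zero {m : Type*} {P M : Matrix m m ℝ} (hM : hasSign P M) {i j : m}
    (hP : P i j = 0) : M i j = 0 :=
  Real.sign_eq_zero_iff.mp ((hM i j).trans hP)

theorem eq_of_hasSign_patT' {R : Matrix (Fin 6) (Fin 6) ℝ} (hR : hasSign patT' R) :
    R = !![R 0 0, R 0 1, 0, 0, 0, 0; R 1 0, R 1 1, R 1 2, 0, 0, 0; R 2 0, 0, 0, R 2 3, 0, 0;
      0, 0, 0, 0, R 3 4, 0; R 4 0, R 4 1, 0, 0, 0, R 4 5; R 5 0, R 5 1, R 5 2, 0, R 5 4, 0] := by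
  ext i j
  fin_cases i <;> fin_cases j <;> first | rfl | exact hR.apply_eq_zero rfl

section

variable {α : Type*} [CommRing α]

theorem det_fin_six_sparse (q0 q1 q2 q3 q4 q5 b c e f g h i j k l m n p : α) :
    det !![q0,b,0,0,0,0; c,q1,e,0,0,0; f,0,q2,g,0,0; 0,0,0,q3,h,0;
           i,j,0,0,q4,k; l,m,n,0,p,q5] =
      q0*q1*q2*q3*q4*q5 - b*c*q2*q3*q4*q5 - k*p*q0*q1*q2*q3 + b*c*k*p*q2*q3
      + b*e*f*q3*q4*q5 - b*e*f*k*p*q3 - g*h*k*n*q0*q1 + b*c*g*h*k*n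
      - e*g*h*j*q0*q5 + b*e*g*h*i*q5 + e*g*h*k*m*q0 - b*e*g*h*k*l := by
  simp [det_succ_row_zero, Fin.sum_univ_succ, Fin.succAbove]
  ring

theorem charpoly_fin_six_sparse (a b c d e f g h i j k l m n p : α) :
    (!![a,b,0,0,0,0; c,d,e,0,0,0; f,0,0,g,0,0; 0,0,0,0,h,0;
      i,j,0,0,0,k; l,m,n,0,p,0] : Matrix (Fin 6) (Fin 6) α).charpoly =
      X^6 - C (a+d) * X^5 + C (a*d - b*c - k*p) * X^4 + C (-(b*e*f) + (a+d)*k*p) * X^3 +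
      C (b*c*k*p - a*d*k*p - g*h*k*n - e*g*h*j) * X^2 +
      C ((a+d)*g*h*k*n + a*e*g*h*j - e*g*h*k*m + b*e*f*k*p - b*e*g*h*i) * X +
      C ((b*c - a*d)*g*h*k*n + a*e*g*h*k*m - b*e*g*h*k*l) := by
  have hchar : charmatrix (!![a,b,0,0,0,0; c,d,e,0,0,0; f,0,0,g,0,0; 0,0,0,0,h,0;
      i,j,0,0,0,k; l,m,n,0,p,0] : Matrix (Fin 6) (Fin 6) α) =
      !![X - C a, -C b, 0, 0, 0, 0; -C c, X - C d, -C e, 0, 0, 0; -C f, 0, X, -C g, 0, 0;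
        0, 0, 0, X, -C h, 0; -C i, -C j, 0, 0, X, -C k; -C l, -C m, -C n, 0, -C p, X] := by
    ext r s
    fin_cases r <;> fin_cases s <;> simp
  rw [charpoly, hchar, det_fin_six_sparse]
  simp only [map_add, map_sub, map_mul, map_neg]
  ring

end

theorem stmt_0 (R : Matrix (Fin 6) (Fin 6) ℝ) (hR : hasSign patT' R) :
    R.charpoly.coeff 3 =
      -(R 0 1 * R 1 2 * R 2 0) + (R 0 0 + R 1 1) * R 4 5 * R 5 4 ∧
    R.charpoly.coeff 5 = -(R 0 0 + R 1 1) := by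
  have hchar := charpoly_fin_six_sparse (R 0 0) (R 0 1) (R 1 0) (R 1 1) (R 1 2) (R 2 0) (R 2 3)
    (R 3 4) (R 4 0) (R 4 1) (R 4 5) (R 5 0) (R 5 1) (R 5 2) (R 5 4)
  rw [← eq_of_hasSign_patT' hR] at hchar
  rw [hchar]
  constructor <;>
    simp only [coeff_add, coeff_sub, coeff_C_mul, coeff_X_pow, coeff_X, coeff_C] <;> norm_num
end

section
/- Let R be a 6×6 real matrix with the sign pattern T': r11>0, r12>0, r21<0, r22<0, r23>0, r31>0, r34>0, r45>0, r51<0, r52<0, r56>0, r61>0, r62>0, r63>0, r65<0, and all other entries zero. Then R is not nilpotent. -/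
/-!
A nilpotent real matrix has `tr R = tr R³ = 0`. For the pattern `T'` the only nonzero diagonal
entries are `r₁₁, r₂₂`, so `tr R = r₁₁ + r₂₂`, and `tr R³` counts closed walks of length three:
those through the loops at 1 and 2 contribute a multiple of `r₁₁ + r₂₂`, and the only other one
is the 3-cycle `1 → 2 → 3 → 1`. Hence `tr R³ = 3 r₁₂ r₂₃ r₃₁ > 0`.
-/

open Polynomial Matrix
open scoped Classical

theorem Matrix.trace_pow_eq_zero_of_isNilpotent {n R : Type*} [Fintype n] [DecidableEq n]
    [CommRing R] [IsReduced R] {A : Matrix n n R} (hA : IsNilpotent A) {k : ℕ} (hk : k ≠ 0) :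
    (A ^ k).trace = 0 :=
  (isNilpotent_trace_of_isNilpotent (hA.pow_of_pos hk)).eq_zero

namespace hasSign

variable {m : Type*} {P M : Matrix m m ℝ}

theorem eq_zero (h : hasSign P M) {i j : m} (hij : P i j = 0) : M i j = 0 :=
  Real.sign_eq_zero_iff.mp ((h i j).trans hij)

theorem pos (h : hasSign P M) {i j : m} (hij : P i j = 1) : 0 < M i j := by
  have hs : Real.sign (M i j) = 1 := (h i j).trans hij
  have hne : M i j ≠ 0 := fun h0 => by simp [h0] at hs
  simpa [hs] using Real.sign_mul_pos_of_ne_zero _ hne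

end hasSign

section PatternT'

variable {R : Matrix (Fin 6) (Fin 6) ℝ}

theorem trace_eq_of_hasSign_patT' (hR : hasSign patT' R) : R.trace = R 0 0 + R 1 1 := by
  simp (disch := simp [patT']) only [trace, Fin.sum_univ_six, diag_apply, hR.eq_zero]
  ring

theorem trace_pow_three_eq_of_hasSign_patT' (hR : hasSign patT' R) :
    (R ^ 3).trace = (R 0 0 + R 1 1) * (R 0 0 ^ 2 - R 0 0 * R 1 1 + R 1 1 ^ 2 + 3 * R 0 1 * R 1 0)
      + 3 * (R 0 1 * R 1 2 * R 2 0) := by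
  simp (disch := simp [patT']) only [pow_three, trace, Fin.sum_univ_six, diag_apply, mul_apply,
    hR.eq_zero]
  ring

end PatternT'

theorem stmt_1 (R : Matrix (Fin 6) (Fin 6) ℝ) (hR : hasSign patT' R) :
    ¬ IsNilpotent R := by
  intro hN
  have htrace : R 0 0 + R 1 1 = 0 := by
    simpa [trace_eq_of_hasSign_patT' hR] using trace_pow_eq_zero_of_isNilpotent hN one_ne_zero
  have hcycle : 0 < R 0 1 * R 1 2 * R 2 0 :=
    mul_pos (mul_pos (hR.pos rfl) (hR.pos rfl)) (hR.pos rfl)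
  have hcube := trace_pow_eq_zero_of_isNilpotent hN three_ne_zero
  rw [trace_pow_three_eq_of_hasSign_patT' hR, htrace] at hcube
  linarith
end

section
/- Let R be a 6×6 real matrix with the sign pattern T: r11>0, r12>0, r21<0, r22<0, r23>0, r34>0, r45>0, r51<0, r52<0, r56>0, r61>0, r62>0, r63>0, r65<0, and all other entries zero. Write the characteristic polynomial of R as t^6 + a5·t^5 + a4·t^4 + a3·t^3 + a2·t^2 + a1·t + a0. Then a3 = 0 if and only if a5 = 0. -/
open Polynomial Matrix
open scoped Classical

/-!
A matrix with sign pattern `T` has trace `r₁₁ + r₂₂`, and expanding its characteristic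
determinant gives `a₃ = (r₁₁ + r₂₂) r₅₆ r₆₅`. Since `a₅ = -(r₁₁ + r₂₂)` and `r₅₆ r₆₅ ≠ 0`,
both coefficients vanish exactly when `r₁₁ + r₂₂ = 0`.
-/

theorem hasSign.apply_eq_zero_iff {m : Type*} {P M : Matrix m m ℝ} (h : hasSign P M) (i j : m) :
    M i j = 0 ↔ P i j = 0 := by
  rw [← h i j, Real.sign_eq_zero_iff]

section patTMatrix

variable {K : Type*} [CommRing K]

def patTMatrix (a b c d e f g h i j k l m n : K) : Matrix (Fin 6) (Fin 6) K :=
  !![a, b, 0, 0, 0, 0; c, d, e, 0, 0, 0; 0, 0, 0, f, 0, 0; 0, 0, 0, 0, g, 0;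
     h, i, 0, 0, 0, j; k, l, m, 0, n, 0]

theorem charmatrix_patTMatrix (a b c d e f g h i j k l m n : K) :
    charmatrix (patTMatrix a b c d e f g h i j k l m n) =
      !![X - C a, -C b, 0, 0, 0, 0; -C c, X - C d, -C e, 0, 0, 0; 0, 0, X, -C f, 0, 0;
         0, 0, 0, X, -C g, 0; -C h, -C i, 0, 0, X, -C j; -C k, -C l, -C m, 0, -C n, X] := by
  ext i j
  fin_cases i <;> fin_cases j <;> simp [patTMatrix]

theorem charpoly_patTMatrix (a b c d e f g h i j k l m n : K) :
    (patTMatrix a b c d e f g h i j k l m n).charpoly =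
      X ^ 6 - C (a + d) * X ^ 5 + C (a * d - b * c - j * n) * X ^ 4 + C ((a + d) * j * n) * X ^ 3
        + C (b * c * j * n - a * d * j * n - f * g * j * m - e * f * g * i) * X ^ 2
        + C (a * f * g * j * m + d * f * g * j * m + a * e * f * g * i - e * f * g * j * l
            - b * e * f * g * h) * X
        + C (f * g * j * (a * e * l - b * e * k + b * c * m - a * d * m)) := by
  rw [charpoly, charmatrix_patTMatrix]
  simp +decide [det_succ_row_zero, Fin.sum_univ_succ, Fin.succAbove]
  ring

theorem charpoly_patTMatrix_coeff_three (a b c d e f g h i j k l m n : K) :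
    (patTMatrix a b c d e f g h i j k l m n).charpoly.coeff 3 = (a + d) * j * n := by
  rw [charpoly_patTMatrix]
  simp only [coeff_add, coeff_sub, coeff_C_mul, coeff_X_pow, coeff_X, coeff_C]
  norm_num

theorem charpoly_patTMatrix_coeff_five (a b c d e f g h i j k l m n : K) :
    (patTMatrix a b c d e f g h i j k l m n).charpoly.coeff 5 = -(a + d) := by
  rw [charpoly_patTMatrix]
  simp only [coeff_add, coeff_sub, coeff_C_mul, coeff_X_pow, coeff_X, coeff_C]
  norm_num

end patTMatrix

theorem eq_patTMatrix_of_hasSign_patT {R : Matrix (Fin 6) (Fin 6) ℝ} (hR : hasSign patT R) :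
    R = patTMatrix (R 0 0) (R 0 1) (R 1 0) (R 1 1) (R 1 2) (R 2 3) (R 3 4) (R 4 0) (R 4 1)
      (R 4 5) (R 5 0) (R 5 1) (R 5 2) (R 5 4) := by
  ext i j
  fin_cases i <;> fin_cases j <;> first | rfl | exact (hR.apply_eq_zero_iff _ _).2 rfl

theorem stmt_2 (R : Matrix (Fin 6) (Fin 6) ℝ) (hR : hasSign patT R) :
    R.charpoly.coeff 3 = 0 ↔ R.charpoly.coeff 5 = 0 := by
  have h45 : R 4 5 ≠ 0 := mt (hR.apply_eq_zero_iff 4 5).1 (by simp [patT])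
  have h54 : R 5 4 ≠ 0 := mt (hR.apply_eq_zero_iff 5 4).1 (by simp [patT])
  rw [eq_patTMatrix_of_hasSign_patT hR, charpoly_patTMatrix_coeff_three,
    charpoly_patTMatrix_coeff_five, mul_assoc, mul_eq_zero_iff_right (mul_ne_zero h45 h54),
    neg_eq_zero]
end

section
/- For all real numbers b, c, d, there exist positive real numbers x1,...,x9 such that the 6×6 matrix X with rows (x1, 1, 0, 0, 0, 0), (-x4, -x2, 1, 0, 0, 0), (0, 0, 0, 1, 0, 0), (0, 0, 0, 0, 1, 0), (-x6, -x5, 0, 0, 0, 1), (x7, x8, x9, 0, -x3, 0) has characteristic polynomial (t^2 + b)(t^2 + c)(t^2 + d). -/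
open Polynomial Matrix
open scoped Classical

def matX (x1 x2 x3 x4 x5 x6 x7 x8 x9 : ℝ) : Matrix (Fin 6) (Fin 6) ℝ :=
  !![x1, 1, 0, 0, 0, 0;
     -x4, -x2, 1, 0, 0, 0;
     0, 0, 0, 1, 0, 0;
     0, 0, 0, 0, 1, 0;
     -x6, -x5, 0, 0, 0, 1;
     x7, x8, x9, 0, -x3, 0]

/-!
Every entry $x_4, x_5, x_6, x_7$ enters exactly one coefficient of the characteristic polynomial,
and linearly, so the coefficients can be prescribed one after another. Taking $x_1 = x_2$ kills
the odd coefficients; $x_1 = x_2$ large makes $x_4$ positive, and $x_9$, $x_8$ large make $x_5$,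
$x_7$ positive.
-/

lemma charmatrix_matX (x1 x2 x3 x4 x5 x6 x7 x8 x9 : ℝ) :
    charmatrix (matX x1 x2 x3 x4 x5 x6 x7 x8 x9) =
      !![X - C x1, -1, 0, 0, 0, 0;
         C x4, X + C x2, -1, 0, 0, 0;
         0, 0, X, -1, 0, 0;
         0, 0, 0, X, -1, 0;
         C x6, C x5, 0, 0, X, -1;
         -C x7, -C x8, -C x9, 0, C x3, X] := by
  ext i j
  fin_cases i <;> fin_cases j <;> simp [matX]

lemma charpoly_matX (x1 x2 x3 x4 x5 x6 x7 x8 x9 : ℝ) :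
    (matX x1 x2 x3 x4 x5 x6 x7 x8 x9).charpoly =
      X ^ 6 + C (x2 - x1) * X ^ 5 + C (x4 + x3 - x1 * x2) * X ^ 4
        + C (x2 * x3 - x1 * x3) * X ^ 3 + C (x5 - x9 + x3 * x4 - x1 * x2 * x3) * X ^ 2
        + C (x6 - x8 - x2 * x9 + x1 * x9 - x1 * x5) * X
        + C (x1 * x8 - x7 - x4 * x9 + x1 * x2 * x9) := by
  rw [Matrix.charpoly, charmatrix_matX]
  simp [Matrix.det_succ_row_zero, Fin.sum_univ_succ, Fin.succAbove]
  ring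

lemma exists_pos_coeff_eq (s p q : ℝ) :
    ∃ x1 x2 x3 x4 x5 x6 x7 x8 x9 : ℝ,
      0 < x1 ∧ 0 < x2 ∧ 0 < x3 ∧ 0 < x4 ∧ 0 < x5 ∧ 0 < x6 ∧ 0 < x7 ∧ 0 < x8 ∧ 0 < x9 ∧
      x2 - x1 = 0 ∧ x4 + x3 - x1 * x2 = s ∧ x2 * x3 - x1 * x3 = 0 ∧
      x5 - x9 + x3 * x4 - x1 * x2 * x3 = p ∧ x6 - x8 - x2 * x9 + x1 * x9 - x1 * x5 = 0 ∧
      x1 * x8 - x7 - x4 * x9 + x1 * x2 * x9 = q := by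
  set a := |s| + 2
  set x9 := |p - s + 1| + 1
  set x5 := x9 + p - s + 1
  set x8 := |(1 - s) * x9 - q| + 1
  have ha : 2 ≤ a := le_add_of_nonneg_left (abs_nonneg s)
  have hx4 : 0 < s + a ^ 2 - 1 := by nlinarith [neg_abs_le s]
  have hx9 : 0 < x9 := by positivity
  have hx5 : 0 < x5 := by linarith [neg_abs_le (p - s + 1)]
  have hx8 : 0 < x8 := by positivity
  have hx7 : 0 < a * x8 + (1 - s) * x9 - q := by
    nlinarith [neg_abs_le ((1 - s) * x9 - q)]
  refine ⟨a, a, 1, s + a ^ 2 - 1, x5, x8 + a * x5, a * x8 + (1 - s) * x9 - q, x8, x9,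
    by positivity, by positivity, one_pos, hx4, hx5, by positivity, hx7, hx8, hx9, ?_⟩
  refine ⟨?_, ?_, ?_, ?_, ?_, ?_⟩ <;> ring

theorem stmt_4 (b c d : ℝ) :
    ∃ x1 x2 x3 x4 x5 x6 x7 x8 x9 : ℝ,
      0 < x1 ∧ 0 < x2 ∧ 0 < x3 ∧ 0 < x4 ∧ 0 < x5 ∧ 0 < x6 ∧ 0 < x7 ∧ 0 < x8 ∧ 0 < x9 ∧
      (matX x1 x2 x3 x4 x5 x6 x7 x8 x9).charpoly =
        (X ^ 2 + C b) * (X ^ 2 + C c) * (X ^ 2 + C d) := by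
  obtain ⟨x1, x2, x3, x4, x5, x6, x7, x8, x9, h1, h2, h3, h4, h5, h6, h7, h8, h9,
      e5, e4, e3, e2, e1, e0⟩ :=
    exists_pos_coeff_eq (b + c + d) (b * c + b * d + c * d) (b * c * d)
  refine ⟨x1, x2, x3, x4, x5, x6, x7, x8, x9, h1, h2, h3, h4, h5, h6, h7, h8, h9, ?_⟩
  rw [charpoly_matX, e5, e4, e3, e2, e1, e0]
  simp only [map_add, map_mul, map_zero]
  ring
end

section
/- Every monic real polynomial f of degree 16 has a monic divisor of degree 6 which is realizable as the characteristic polynomial of some 6×6 real matrix with sign pattern T, i.e., a matrix R with r11>0, r12>0, r21<0, r22<0, r23>0, r34>0, r45>0, r51<0, r52<0, r56>0, r61>0, r62>0, r63>0, r65<0, and all other entries zero. -/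
/-!
Factor `f` into monic irreducible real polynomials, all of degree 1 or 2, and sort the factors by
the sign of their subleading coefficient. Since `16 > 3 * 5`, one sign class has total degree at
least 6, and (pairing up its linear factors) it contains the factors of a divisor `h` of degree
exactly 6. If the class is positive, all coefficients of `h` are positive, because a monic
irreducible real quadratic has a positive constant term; if it is negative, the same holds for
`h.scaleRoots (-1) = h(-t)`; if it is zero, `h` is even. In each case the coefficients `c₅, c₃` of
`t⁵, t³` in `h` vanish together or have the same sign, and every monic sextic with this property is
the characteristic polynomial of an explicit matrix with sign pattern `T`.
-/
open Polynomial Matrix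
open scoped Classical

namespace Multiset

variable {α : Type*}

lemma exists_le_card_eq {s : Multiset α} {n : ℕ} (h : n ≤ card s) : ∃ t ≤ s, card t = n := by
  obtain ⟨t, ht⟩ := card_pos_iff_exists_mem.mp
    (by rw [card_powersetCard]; exact Nat.choose_pos h : 0 < card (powersetCard n s))
  exact ⟨t, mem_powersetCard.mp ht⟩

lemma exists_le_sum_map_eq_two_mul {s : Multiset α} {f : α → ℕ}
    (hf : ∀ a ∈ s, f a = 1 ∨ f a = 2) {k : ℕ} (hk : 2 * k ≤ (s.map f).sum) :
    ∃ t ≤ s, (t.map f).sum = 2 * k := by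
  have sum_const (t : Multiset α) (c : ℕ) (ht : ∀ a ∈ t, f a = c) :
      (t.map f).sum = card t * c := by
    rw [map_congr rfl ht, map_const', sum_replicate, smul_eq_mul]
  set ones := s.filter (f · = 1)
  set twos := s.filter (¬ f · = 1)
  have hones : ∀ a ∈ ones, f a = 1 := fun a ha => (mem_filter.mp ha).2
  have htwos : ∀ a ∈ twos, f a = 2 := fun a ha =>
    (hf a (mem_filter.mp ha).1).resolve_left (mem_filter.mp ha).2
  have hsum : (s.map f).sum = card ones + card twos * 2 := by
    rw [← filter_add_not (f · = 1) s, map_add, sum_add, sum_const ones 1 hones,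
      sum_const twos 2 htwos, mul_one]
  -- take as many pairs of ones as possible, then fill up with twos
  obtain ⟨o, ho, hco⟩ := exists_le_card_eq (s := ones) (n := 2 * min (card ones / 2) k) (by omega)
  obtain ⟨w, hw, hcw⟩ := exists_le_card_eq (s := twos) (n := k - min (card ones / 2) k) (by omega)
  refine ⟨o + w, (add_le_add ho hw).trans (filter_add_not _ s).le, ?_⟩
  rw [map_add, sum_add, sum_const o 1 (fun a ha => hones a (mem_of_le ho ha)),
    sum_const w 2 (fun a ha => htwos a (mem_of_le hw ha))]
  omega

lemma filter_gt_add_filter_lt_add_filter_eq {β : Type*} [LinearOrder β] (s : Multiset α)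
    (g : α → β) (b : β) :
    s.filter (b < g ·) + s.filter (g · < b) + s.filter (g · = b) = s := by
  ext a
  simp only [count_add, count_filter]
  rcases lt_trichotomy (g a) b with h | h | h
  · simp [h, h.ne, h.not_gt]
  · simp [h]
  · simp [h, h.ne', h.not_gt]

end Multiset

namespace Polynomial

section CoeffsPos

variable {R : Type*} [Semiring R] [PartialOrder R]

def CoeffsPos (p : R[X]) : Prop :=
  ∀ i ≤ p.natDegree, 0 < p.coeff i

lemma CoeffsPos.coeff_nonneg {p : R[X]} (hp : CoeffsPos p) (i : ℕ) : 0 ≤ p.coeff i := by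
  rcases le_or_gt i p.natDegree with hi | hi
  · exact (hp i hi).le
  · rw [coeff_eq_zero_of_natDegree_lt hi]

variable [IsStrictOrderedRing R]

lemma CoeffsPos.one : CoeffsPos (1 : R[X]) := by
  intro i hi
  simp_all

lemma CoeffsPos.mul {p q : R[X]} (hp : CoeffsPos p) (hq : CoeffsPos q) :
    CoeffsPos (p * q) := by
  intro k hk
  rw [natDegree_mul' (mul_pos (hp _ le_rfl) (hq _ le_rfl)).ne'] at hk
  rw [coeff_mul]
  refine Finset.sum_pos' (fun x _ => mul_nonneg (hp.coeff_nonneg _) (hq.coeff_nonneg _))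
    ⟨(min k p.natDegree, k - min k p.natDegree),
      Finset.HasAntidiagonal.mem_antidiagonal.mpr (Nat.add_sub_cancel' (min_le_left _ _)),
      mul_pos (hp _ (min_le_right _ _)) (hq _ (by omega))⟩

end CoeffsPos

lemma CoeffsPos.multiset_prod {R : Type*} [CommSemiring R] [PartialOrder R]
    [IsStrictOrderedRing R] {S : Multiset R[X]} (hS : ∀ p ∈ S, CoeffsPos p) :
    CoeffsPos S.prod :=
  Multiset.prod_induction _ S (fun _ _ => CoeffsPos.mul) CoeffsPos.one hS

section ScaleRoots

variable {R : Type*} [CommRing R]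

lemma scaleRoots_multiset_prod [NoZeroDivisors R] (S : Multiset R[X]) (s : R) :
    S.prod.scaleRoots s = (S.map (·.scaleRoots s)).prod := by
  induction S using Multiset.induction_on with
  | empty => simp
  | cons p S ih => simp [mul_scaleRoots_of_noZeroDivisors, ih]

lemma scaleRoots_neg_one_eq_self {p : R[X]} (hd : p.natDegree ≤ 2) (hp : p.nextCoeff = 0) :
    p.scaleRoots (-1) = p := by
  ext i
  rw [coeff_scaleRoots]
  rcases lt_or_ge p.natDegree i with hi | hi
  · simp [coeff_eq_zero_of_natDegree_lt hi]
  obtain hi | hi | hi : p.natDegree - i = 0 ∨ p.natDegree - i = 1 ∨ p.natDegree - i = 2 := by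
    omega
  · simp [hi]
  · rw [nextCoeff_of_natDegree_pos (by omega), show p.natDegree - 1 = i by omega] at hp
    simp [hp]
  · simp [hi]

variable [LinearOrder R] [IsStrictOrderedRing R]

lemma coeff_eq_zero_of_scaleRoots_neg_one_eq_self {p : R[X]} (hp : p.scaleRoots (-1) = p)
    {i : ℕ} (hi : Odd (p.natDegree - i)) : p.coeff i = 0 := by
  have h := congrArg (coeff · i) hp
  simp only [coeff_scaleRoots, hi.neg_one_pow, mul_neg, mul_one] at h
  linarith

lemma CoeffsPos.coeff_mul_coeff_pos_of_scaleRoots {p : R[X]} {s : R}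
    (hp : CoeffsPos (p.scaleRoots s)) {i j : ℕ} (hi : i ≤ p.natDegree) (hj : j ≤ p.natDegree)
    (hij : Even (i + j)) : 0 < p.coeff i * p.coeff j := by
  have h := mul_pos (hp i (by simpa using hi)) (hp j (by simpa using hj))
  simp only [coeff_scaleRoots] at h
  have heven : Even ((p.natDegree - i) + (p.natDegree - j)) := by
    obtain ⟨k, hk⟩ := hij
    exact ⟨p.natDegree - k, by omega⟩
  refine pos_of_mul_pos_left (b := s ^ ((p.natDegree - i) + (p.natDegree - j))) ?_
    (heven.pow_nonneg s)
  rw [pow_add]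
  linarith [h]

end ScaleRoots

lemma Irreducible.coeff_zero_pos_of_natDegree_eq_two {p : ℝ[X]} (hirr : Irreducible p)
    (hm : p.Monic) (hd : p.natDegree = 2) : 0 < p.coeff 0 := by
  obtain ⟨b, c, rfl⟩ := isMonicOfDegree_two_iff.mp ⟨hd, hm⟩
  rw [show (X ^ 2 + C b * X + C c : ℝ[X]).coeff 0 = c by simp]
  by_contra! hc
  obtain ⟨x, hx⟩ := exists_quadratic_eq_zero one_ne_zero
    ⟨√(discrim 1 b c), (Real.mul_self_sqrt (by rw [discrim]; nlinarith [sq_nonneg b])).symm⟩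
  have hroot : (X ^ 2 + C b * X + C c).IsRoot x := by
    simp only [IsRoot, eval_add, eval_pow, eval_mul, eval_X, eval_C]
    linear_combination hx
  have := degree_eq_one_of_irreducible_of_root hirr hroot
  rw [degree_eq_natDegree hm.ne_zero, hd] at this
  exact absurd this (by decide)

lemma CoeffsPos.scaleRoots_of_irreducible {p : ℝ[X]} (hirr : Irreducible p) (hm : p.Monic)
    {s : ℝ} (hs : 0 < p.nextCoeff * s) : CoeffsPos (p.scaleRoots s) := by
  have hlead := hm.coeff_natDegree
  rw [nextCoeff_of_natDegree_pos hirr.natDegree_pos] at hs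
  intro i hi
  rw [natDegree_scaleRoots] at hi
  rw [coeff_scaleRoots]
  obtain hd | hd : p.natDegree = 1 ∨ p.natDegree = 2 := by
    have := hirr.natDegree_pos; have := hirr.natDegree_le_two; omega
  all_goals rw [hd] at hs hi hlead ⊢; interval_cases i
  · simpa using hs
  · simp [hlead]
  · have hs0 : s ≠ 0 := by rintro rfl; simp at hs
    exact mul_pos (hirr.coeff_zero_pos_of_natDegree_eq_two hm hd) (even_two.pow_pos hs0)
  · simpa using hs
  · simp [hlead]

lemma coeff_mul_coeff_multiset_prod_pos {S : Multiset ℝ[X]} {s : ℝ}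
    (hS : ∀ p ∈ S, Irreducible p ∧ p.Monic ∧ 0 < p.nextCoeff * s) {i j : ℕ}
    (hi : i ≤ S.prod.natDegree) (hj : j ≤ S.prod.natDegree) (hij : Even (i + j)) :
    0 < S.prod.coeff i * S.prod.coeff j := by
  refine CoeffsPos.coeff_mul_coeff_pos_of_scaleRoots (s := s) ?_ hi hj hij
  rw [scaleRoots_multiset_prod]
  refine CoeffsPos.multiset_prod fun q hq => ?_
  obtain ⟨p, hp, rfl⟩ := Multiset.mem_map.mp hq
  obtain ⟨hirr, hm, hs⟩ := hS p hp
  exact CoeffsPos.scaleRoots_of_irreducible hirr hm hs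

lemma coeff_multiset_prod_eq_zero_of_nextCoeff_eq_zero {S : Multiset ℝ[X]}
    (hS : ∀ p ∈ S, Irreducible p ∧ p.nextCoeff = 0) {i : ℕ} (hi : Odd (S.prod.natDegree - i)) :
    S.prod.coeff i = 0 := by
  refine coeff_eq_zero_of_scaleRoots_neg_one_eq_self ?_ hi
  rw [scaleRoots_multiset_prod, Multiset.map_congr rfl fun p hp =>
    scaleRoots_neg_one_eq_self (hS p hp).1.natDegree_le_two (hS p hp).2, Multiset.map_id']

section Factors

open UniqueFactorizationMonoid

lemma irreducible_monic_of_mem_normalizedFactors {K : Type*} [Field K] {f p : K[X]}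
    (hp : p ∈ normalizedFactors f) : Irreducible p ∧ p.Monic :=
  have hirr := irreducible_of_normalized_factor p hp
  ⟨hirr, normalize_normalized_factor p hp ▸ monic_normalize hirr.ne_zero⟩

lemma Monic.prod_normalizedFactors {K : Type*} [Field K] {f : K[X]} (hf : f.Monic) :
    (normalizedFactors f).prod = f := by
  rw [prod_normalizedFactors_eq hf.ne_zero, hf.normalize_eq_self]

lemma exists_prod_dvd_natDegree_eq_two_mul {f : ℝ[X]} (hf : f.Monic) (P : ℝ[X] → Prop)
    [DecidablePred P] {k : ℕ} (hk : 2 * k ≤ (((normalizedFactors f).filter P).map natDegree).sum) :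
    ∃ T : Multiset ℝ[X], (∀ p ∈ T, Irreducible p ∧ p.Monic ∧ P p) ∧ T.prod.Monic ∧
      T.prod.natDegree = 2 * k ∧ T.prod ∣ f := by
  have hF : ∀ p ∈ (normalizedFactors f).filter P, Irreducible p ∧ p.Monic ∧ P p :=
    fun p hp => by
      obtain ⟨hpf, hpP⟩ := Multiset.mem_filter.mp hp
      exact ⟨(irreducible_monic_of_mem_normalizedFactors hpf).1,
        (irreducible_monic_of_mem_normalizedFactors hpf).2, hpP⟩
  have hdeg : ∀ p ∈ (normalizedFactors f).filter P, p.natDegree = 1 ∨ p.natDegree = 2 :=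
    fun p hp => by
      have := (hF p hp).1.natDegree_pos; have := (hF p hp).1.natDegree_le_two; omega
  obtain ⟨T, hT, hsum⟩ := Multiset.exists_le_sum_map_eq_two_mul hdeg hk
  have hTF : ∀ p ∈ T, Irreducible p ∧ p.Monic ∧ P p := fun p hp => hF p (Multiset.mem_of_le hT hp)
  have hmon : ∀ p ∈ T, p.Monic := fun p hp => (hTF p hp).2.1
  refine ⟨T, hTF, by simpa using monic_multiset_prod_of_monic T id hmon,
    (natDegree_multiset_prod_of_monic T hmon).trans hsum, ?_⟩
  exact hf.prod_normalizedFactors ▸ Multiset.prod_dvd_prod_of_le (hT.trans (Multiset.filter_le _ _))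

theorem exists_dvd_natDegree_eq_six {f : ℝ[X]} (hf : f.Monic) (hdeg : f.natDegree = 16) :
    ∃ h : ℝ[X], h.Monic ∧ h.natDegree = 6 ∧ h ∣ f ∧
      ((h.coeff 5 = 0 ∧ h.coeff 3 = 0) ∨ 0 < h.coeff 5 * h.coeff 3) := by
  set F := normalizedFactors f
  have hFdeg : (F.map natDegree).sum = 16 := by
    rw [← natDegree_multiset_prod_of_monic F fun p hp =>
      (irreducible_monic_of_mem_normalizedFactors hp).2, hf.prod_normalizedFactors, hdeg]
  rw [← F.filter_gt_add_filter_lt_add_filter_eq nextCoeff 0, Multiset.map_add, Multiset.map_add,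
    Multiset.sum_add, Multiset.sum_add] at hFdeg
  obtain hpos | hneg | hzero : 2 * 3 ≤ ((F.filter (0 < ·.nextCoeff)).map natDegree).sum ∨
      2 * 3 ≤ ((F.filter (·.nextCoeff < 0)).map natDegree).sum ∨
      2 * 3 ≤ ((F.filter (·.nextCoeff = 0)).map natDegree).sum := by omega
  · obtain ⟨T, hT, hm, hd, hdvd⟩ := exists_prod_dvd_natDegree_eq_two_mul hf _ hpos
    refine ⟨T.prod, hm, hd, hdvd, Or.inr ?_⟩
    exact coeff_mul_coeff_multiset_prod_pos (s := 1)
      (fun p hp => ⟨(hT p hp).1, (hT p hp).2.1, by simpa using (hT p hp).2.2⟩)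
      (by omega) (by omega) ⟨4, rfl⟩
  · obtain ⟨T, hT, hm, hd, hdvd⟩ := exists_prod_dvd_natDegree_eq_two_mul hf _ hneg
    refine ⟨T.prod, hm, hd, hdvd, Or.inr ?_⟩
    exact coeff_mul_coeff_multiset_prod_pos (s := -1)
      (fun p hp => ⟨(hT p hp).1, (hT p hp).2.1, by simpa using (hT p hp).2.2⟩)
      (by omega) (by omega) ⟨4, rfl⟩
  · obtain ⟨T, hT, hm, hd, hdvd⟩ := exists_prod_dvd_natDegree_eq_two_mul hf _ hzero
    have hT' : ∀ p ∈ T, Irreducible p ∧ p.nextCoeff = 0 := fun p hp =>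
      ⟨(hT p hp).1, (hT p hp).2.2⟩
    refine ⟨T.prod, hm, hd, hdvd, Or.inl ⟨?_, ?_⟩⟩
    · exact coeff_multiset_prod_eq_zero_of_nextCoeff_eq_zero hT' (by rw [hd]; decide)
    · exact coeff_multiset_prod_eq_zero_of_nextCoeff_eq_zero hT' (by rw [hd]; decide)

end Factors

end Polynomial

def tMatrix (u v w s a51 a52 a61 a62 a63 : ℝ) : Matrix (Fin 6) (Fin 6) ℝ :=
  !![u, w, 0, 0, 0, 0;
    -1, -v, 1, 0, 0, 0;
    0, 0, 0, 1, 0, 0;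
    0, 0, 0, 0, 1, 0;
    -a51, -a52, 0, 0, 0, 1;
    a61, a62, a63, 0, -s, 0]

lemma hasSign_patT_tMatrix {u v w s a51 a52 a61 a62 a63 : ℝ} (hu : 0 < u) (hv : 0 < v)
    (hw : 0 < w) (hs : 0 < s) (h51 : 0 < a51) (h52 : 0 < a52) (h61 : 0 < a61) (h62 : 0 < a62)
    (h63 : 0 < a63) : hasSign patT (tMatrix u v w s a51 a52 a61 a62 a63) := by
  intro i j
  fin_cases i <;> fin_cases j <;>
    simp [tMatrix, patT, Real.sign_of_pos, Real.sign_neg, *]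

set_option maxHeartbeats 1000000 in
lemma charpoly_tMatrix (u v w s a51 a52 a61 a62 a63 : ℝ) :
    (tMatrix u v w s a51 a52 a61 a62 a63).charpoly =
      X ^ 6 + C (v - u) * X ^ 5 + C (s + w - u * v) * X ^ 4 + C (s * (v - u)) * X ^ 3
        + C (a52 - a63 + s * (w - u * v)) * X ^ 2
        + C (w * a51 - u * a52 - a62 - (v - u) * a63) * X
        + C (u * a62 - w * a61 + (u * v - w) * a63) := by
  simp [Matrix.charpoly, Matrix.det_succ_row_zero, Fin.sum_univ_succ, tMatrix, charmatrix_apply,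
    Matrix.diagonal_apply, Fin.succAbove]
  ring

lemma exists_pos_sub_eq (x : ℝ) : ∃ a b : ℝ, 0 < a ∧ 0 < b ∧ a - b = x :=
  ⟨max x 0 + 1, max x 0 + 1 - x, by positivity, by linarith [le_max_left x 0], by ring⟩

lemma exists_pos_sub_eq_and_mul_eq (c : ℝ) {D : ℝ} (hD : 0 < D) :
    ∃ u v : ℝ, 0 < u ∧ 0 < v ∧ v - u = c ∧ u * v = D := by
  set e := √(c ^ 2 + 4 * D)
  have he : e ^ 2 = c ^ 2 + 4 * D := Real.sq_sqrt (by positivity)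
  have hc : |c| < e := abs_lt_of_sq_lt_sq (by linarith) (Real.sqrt_nonneg _)
  obtain ⟨hc₁, hc₂⟩ := abs_lt.mp hc
  exact ⟨(e - c) / 2, (e + c) / 2, by linarith, by linarith, by ring,
    by linear_combination he / 4⟩

lemma exists_pos_mul_eq {c₁ c₂ : ℝ} (h : (c₁ = 0 ∧ c₂ = 0) ∨ 0 < c₁ * c₂) :
    ∃ s : ℝ, 0 < s ∧ s * c₁ = c₂ := by
  rcases h with ⟨rfl, rfl⟩ | h
  · exact ⟨1, one_pos, by ring⟩
  have hc₁ : c₁ ≠ 0 := by rintro rfl; simp at h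
  refine ⟨c₂ / c₁, ?_, div_mul_cancel₀ _ hc₁⟩
  rw [← mul_div_mul_left c₂ c₁ hc₁]
  exact div_pos h (mul_self_pos.mpr hc₁)

lemma exists_pos_mul_sub_eq_and_mul_sub_eq {w u : ℝ} (hw : 0 < w) (hu : 0 < u) (y₁ y₀ : ℝ) :
    ∃ a b c : ℝ, 0 < a ∧ 0 < b ∧ 0 < c ∧ w * a - c = y₁ ∧ u * c - w * b = y₀ := by
  obtain ⟨c, hc⟩ := exists_gt (max (max (-y₁) (y₀ / u)) 0)
  obtain ⟨⟨hc₁, hc₀⟩, hc⟩ := by simpa only [max_lt_iff] using hc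
  have hc₀' : y₀ < u * c := by rwa [div_lt_iff₀' hu] at hc₀
  refine ⟨(y₁ + c) / w, (u * c - y₀) / w, c, div_pos (by linarith) hw,
    div_pos (by linarith) hw, hc, ?_, ?_⟩
  · rw [mul_div_cancel₀ _ hw.ne', add_sub_cancel_right]
  · rw [mul_div_cancel₀ _ hw.ne', sub_sub_cancel]

/- The coefficients of `charpoly_tMatrix` can be matched one at a time: `s` from `c₃ = s c₅`,
then `w` and `D = u v` from `c₄`, `u, v` from `c₅` and `D`, `a₅₂ - a₆₃` from `c₂`, and finally
`a₅₁, a₆₁, a₆₂` from `c₁, c₀`. -/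
lemma exists_hasSign_patT_charpoly_eq {h : ℝ[X]} (hm : h.Monic) (hd : h.natDegree = 6)
    (H : (h.coeff 5 = 0 ∧ h.coeff 3 = 0) ∨ 0 < h.coeff 5 * h.coeff 3) :
    ∃ R : Matrix (Fin 6) (Fin 6) ℝ, hasSign patT R ∧ R.charpoly = h := by
  set c := h.coeff
  obtain ⟨s, hs, hs5⟩ := exists_pos_mul_eq H
  obtain ⟨w, D, hw, hD, hwD⟩ := exists_pos_sub_eq (c 4 - s)
  obtain ⟨u, v, hu, hv, hvu, huv⟩ := exists_pos_sub_eq_and_mul_eq (c 5) hD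
  obtain ⟨a52, a63, h52, h63, e2⟩ := exists_pos_sub_eq (c 2 - s * (w - D))
  obtain ⟨a51, a61, a62, h51, h61, h62, e1, e0⟩ := exists_pos_mul_sub_eq_and_mul_sub_eq hw hu
    (c 1 + u * a52 + c 5 * a63) (c 0 - (D - w) * a63)
  refine ⟨tMatrix u v w s a51 a52 a61 a62 a63,
    hasSign_patT_tMatrix hu hv hw hs h51 h52 h61 h62 h63, ?_⟩
  rw [charpoly_tMatrix, hm.as_sum, hd, hvu, huv,
    show s + w - D = c 4 by linarith, hs5,
    show a52 - a63 + s * (w - D) = c 2 by linarith,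
    show w * a51 - u * a52 - a62 - c 5 * a63 = c 1 by linarith,
    show u * a62 - w * a61 + (D - w) * a63 = c 0 by linarith]
  simp only [Finset.sum_range_succ, Finset.sum_range_zero]
  ring

theorem stmt_8 (f : ℝ[X]) (hf : f.Monic) (hdeg : f.natDegree = 16) :
    ∃ h : ℝ[X], h.Monic ∧ h.natDegree = 6 ∧ h ∣ f ∧
      ∃ R : Matrix (Fin 6) (Fin 6) ℝ, hasSign patT R ∧ R.charpoly = h := by
  obtain ⟨h, hm, hd, hdvd, H⟩ := exists_dvd_natDegree_eq_six hf hdeg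
  exact ⟨h, hm, hd, hdvd, exists_hasSign_patT_charpoly_eq hm hd H⟩
end

section
/- Every monic real polynomial of degree 16 can be written as a product of quadratics t^2 + a_i·t + b_i (i = 1,...,8) such that at least seven of the pairs (a_i, b_i) satisfy b_i ≥ 0, and among those seven there exist three indices whose a_i values are either all positive, all negative, or all zero. -/
/-
Split off the real roots: `f = ∏ (X - r) * q` where `q` has no real roots, so every monic
irreducible factor of `q` is a quadratic `X ^ 2 + a X + b` with `b ≥ 0`. Sort the real roots
and pair neighbours: a pair `r ≤ s` has `r s < 0` only if it straddles `0`, so at most one of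
the eight quadratics has a negative constant term. Among the seven others, the signs of the
`a`'s take three values, so by pigeonhole three of them agree.
-/
open Polynomial Matrix
open scoped Classical

noncomputable def quadratic (p : ℝ × ℝ) : ℝ[X] := X ^ 2 + C p.1 * X + C p.2

lemma monic_quadratic (p : ℝ × ℝ) : (quadratic p).Monic := by
  unfold quadratic; monicity!

lemma natDegree_multiset_prod_quadratic (M : Multiset (ℝ × ℝ)) :
    ((M.map quadratic).prod).natDegree = 2 * Multiset.card M := by
  have hdeg (p : ℝ × ℝ) : (quadratic p).natDegree = 2 := by
    unfold quadratic; compute_degree!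
  rw [natDegree_multiset_prod_of_monic _ fun g hg => by
    obtain ⟨p, -, rfl⟩ := Multiset.mem_map.mp hg; exact monic_quadratic p]
  simp [Multiset.map_map, hdeg, mul_comm]

lemma Polynomial.Monic.eq_quadratic {g : ℝ[X]} (hg : g.Monic) (hdeg : g.natDegree = 2) :
    g = quadratic (g.coeff 1, g.coeff 0) := by
  have h2 : g.coeff 2 = 1 := hdeg ▸ hg.coeff_natDegree
  ext (_ | _ | _ | n)
  · simp [quadratic]
  · simp [quadratic]
  · simp [quadratic, h2]
  · rw [coeff_eq_zero_of_natDegree_lt (by omega)]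
    simp [quadratic]

lemma Polynomial.Monic.coeff_zero_nonneg_of_irreducible {g : ℝ[X]} (hg : g.Monic)
    (hdeg : g.natDegree = 2) (hirr : Irreducible g) : 0 ≤ g.coeff 0 := by
  by_contra! hneg
  set a := g.coeff 1
  set b := g.coeff 0
  set s := √(a ^ 2 - 4 * b)
  have hs : s ^ 2 = a ^ 2 - 4 * b := Real.sq_sqrt (by nlinarith)
  exact (hg.not_irreducible_iff_exists_add_mul_eq_coeff hdeg).mpr
    ⟨(a + s) / 2, (a - s) / 2, by nlinarith, by ring⟩ hirr

lemma Irreducible.natDegree_eq_two_of_dvd {g q : ℝ[X]} (hirr : Irreducible g) (hgq : g ∣ q)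
    (hq : q ≠ 0) (hroots : q.roots = 0) : g.natDegree = 2 := by
  have hne1 : g.natDegree ≠ 1 := fun h1 => by
    obtain ⟨x, hx⟩ :=
      exists_root_of_degree_eq_one ((degree_eq_iff_natDegree_eq_of_pos one_pos).mpr h1)
    have : x ∈ q.roots := (mem_roots hq).mpr (hx.dvd hgq)
    simp [hroots] at this
  have := hirr.natDegree_pos
  have := hirr.natDegree_le_two
  omega

open UniqueFactorizationMonoid in
lemma exists_quadratic_factors_of_roots_eq_zero {q : ℝ[X]} (hq : q.Monic) (hroots : q.roots = 0) :
    ∃ Q : Multiset (ℝ × ℝ), q = (Q.map quadratic).prod ∧ ∀ p ∈ Q, 0 ≤ p.2 := by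
  have hfactor {g : ℝ[X]} (hg : g ∈ normalizedFactors q) :
      g.Monic ∧ g.natDegree = 2 ∧ Irreducible g := by
    obtain ⟨hirr, hmonic, hdvd⟩ := (Polynomial.mem_normalizedFactors_iff hq.ne_zero).mp hg
    exact ⟨hmonic, hirr.natDegree_eq_two_of_dvd hdvd hq.ne_zero hroots, hirr⟩
  refine ⟨(normalizedFactors q).map fun g => (g.coeff 1, g.coeff 0), ?_, ?_⟩
  · have hmap : (normalizedFactors q).map (fun g => quadratic (g.coeff 1, g.coeff 0)) =
        normalizedFactors q := by
      rw [Multiset.map_congr rfl fun g hg => ((hfactor hg).1.eq_quadratic (hfactor hg).2.1).symm,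
        Multiset.map_id']
    rw [Multiset.map_map, Function.comp_def, hmap]
    simpa [hq.leadingCoeff] using (leadingCoeff_mul_prod_normalizedFactors q).symm
  · simp only [Multiset.mem_map, forall_exists_index, and_imp]
    rintro _ g hg rfl
    exact (hfactor hg).1.coeff_zero_nonneg_of_irreducible (hfactor hg).2.1 (hfactor hg).2.2

def pairRoots : List ℝ → List (ℝ × ℝ)
  | r :: s :: l => (-(r + s), r * s) :: pairRoots l
  | _ => []

lemma prod_map_quadratic_pairRoots :
    ∀ l : List ℝ, Even l.length →
      ((pairRoots l).map quadratic).prod = (l.map fun r => X - C r).prod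
  | [], _ => rfl
  | [_], hl => by simp at hl
  | r :: s :: l, hl => by
    have hquad : quadratic (-(r + s), r * s) = (X - C r) * (X - C s) := by
      simp only [quadratic, map_neg, map_add, map_mul]; ring
    simp only [pairRoots, List.map_cons, List.prod_cons, hquad, mul_assoc,
      prod_map_quadratic_pairRoots l (by simpa [Nat.even_add_one] using hl)]

lemma countP_pairRoots_eq_zero :
    ∀ l : List ℝ, (∀ x ∈ l, 0 ≤ x) → (pairRoots l).countP (fun p => p.2 < 0) = 0
  | [], _ | [_], _ => rfl
  | r :: s :: l, hl => by
    have hrs : 0 ≤ r * s := mul_nonneg (hl r (by simp)) (hl s (by simp))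
    simp [pairRoots, hrs, countP_pairRoots_eq_zero l fun x hx => hl x (by simp [hx])]

-- Only the pair straddling `0` in the sorted list can have a negative product.
lemma countP_pairRoots_le_one :
    ∀ l : List ℝ, l.Pairwise (· ≤ ·) → (pairRoots l).countP (fun p => p.2 < 0) ≤ 1
  | [], _ | [_], _ => by simp [pairRoots]
  | r :: s :: l, hl => by
    obtain ⟨hr, hs, hl⟩ : (∀ x ∈ s :: l, r ≤ x) ∧ (∀ x ∈ l, s ≤ x) ∧ l.Pairwise (· ≤ ·) := by
      simpa only [List.pairwise_cons] using hl
    simp only [pairRoots, List.countP_cons]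
    by_cases hrs : r * s < 0
    · have hs0 : 0 < s := by nlinarith [hr s (by simp)]
      simp [hrs, countP_pairRoots_eq_zero l fun x hx => hs0.le.trans (hs x hx)]
    · simpa [hrs] using countP_pairRoots_le_one l hl

lemma Multiset.exists_fin_map_eq {α : Type*} {n : ℕ} (M : Multiset α) (hM : M.card = n) :
    ∃ q : Fin n → α, Finset.univ.val.map q = M := by
  obtain ⟨l, rfl⟩ := Quot.exists_rep M
  obtain rfl : l.length = n := hM
  exact ⟨l.get, by rw [Fin.univ_val_map, List.ofFn_get]; rfl⟩

theorem exists_quadratic_factors {f : ℝ[X]} (hf : f.Monic) (heven : Even f.natDegree) :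
    ∃ M : Multiset (ℝ × ℝ), f = (M.map quadratic).prod ∧ M.countP (fun p => p.2 < 0) ≤ 1 := by
  obtain ⟨q, hfq, hdeg, hroots⟩ := exists_prod_multiset_X_sub_C_mul f
  have hq : q.Monic := (monic_multisetProd_X_sub_C f.roots).of_mul_monic_left (by rwa [hfq])
  obtain ⟨Q, rfl, hQ⟩ := exists_quadratic_factors_of_roots_eq_zero hq hroots
  set l := f.roots.sort (· ≤ ·)
  have hl : Even l.length := by
    rw [natDegree_multiset_prod_quadratic] at hdeg
    simpa [l, ← hdeg, parity_simps] using heven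
  refine ⟨pairRoots l + Q, ?_, ?_⟩
  · rw [Multiset.map_add, Multiset.prod_add, Multiset.map_coe, Multiset.prod_coe,
      prod_map_quadratic_pairRoots l hl, ← Multiset.prod_coe, ← Multiset.map_coe,
      Multiset.sort_eq, hfq]
  · rw [Multiset.countP_add, Multiset.countP_eq_zero.mpr fun p hp => not_lt.mpr (hQ p hp),
      Multiset.coe_countP]
    exact countP_pairRoots_le_one l (Multiset.pairwise_sort _ _)

theorem exists_fin_quadratic_factors {f : ℝ[X]} (hf : f.Monic) (n : ℕ)
    (hdeg : f.natDegree = 2 * n) :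
    ∃ q : Fin n → ℝ × ℝ, f = ∏ i, quadratic (q i) ∧
      (Finset.univ.filter fun i => (q i).2 < 0).card ≤ 1 := by
  obtain ⟨M, rfl, hM⟩ := exists_quadratic_factors hf ⟨n, by omega⟩
  have hcard : Multiset.card M = n := by
    rw [natDegree_multiset_prod_quadratic] at hdeg
    omega
  obtain ⟨q, rfl⟩ := M.exists_fin_map_eq hcard
  refine ⟨q, ?_, ?_⟩
  · rw [Finset.prod_eq_multiset_prod, Multiset.map_map]
    rfl
  · rwa [Multiset.countP_map] at hM

theorem Finset.exists_three_of_same_sign {ι : Type*} (s : Finset ι) (hs : 6 < s.card)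
    (a : ι → ℝ) :
    ∃ i ∈ s, ∃ j ∈ s, ∃ k ∈ s, i ≠ j ∧ i ≠ k ∧ j ≠ k ∧
      ((0 < a i ∧ 0 < a j ∧ 0 < a k) ∨ (a i < 0 ∧ a j < 0 ∧ a k < 0) ∨
        (a i = 0 ∧ a j = 0 ∧ a k = 0)) := by
  obtain ⟨σ, -, hσ⟩ := Finset.exists_lt_card_fiber_of_mul_lt_card_of_maps_to
    (f := fun i => SignType.sign (a i)) (t := Finset.univ) (n := 2)
    (fun i _ => Finset.mem_univ _)
    (by rw [Finset.card_univ, show Fintype.card SignType = 3 from rfl]; omega)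
  obtain ⟨i, hi, j, hj, k, hk, hij, hik, hjk⟩ := Finset.two_lt_card.mp hσ
  simp only [Finset.mem_filter] at hi hj hk
  refine ⟨i, hi.1, j, hj.1, k, hk.1, hij, hik, hjk, ?_⟩
  rcases σ with _ | _ | _ <;> simp_all [sign_eq_zero_iff, sign_eq_neg_one_iff, sign_eq_one_iff]

theorem stmt_9 (f : ℝ[X]) (hf : f.Monic) (hdeg : f.natDegree = 16) :
    ∃ a b : Fin 8 → ℝ,
      f = ∏ i : Fin 8, (X ^ 2 + C (a i) * X + C (b i)) ∧
      ∃ s : Finset (Fin 8), s.card = 7 ∧ (∀ i ∈ s, 0 ≤ b i) ∧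
        ∃ i ∈ s, ∃ j ∈ s, ∃ k ∈ s, i ≠ j ∧ i ≠ k ∧ j ≠ k ∧
          ((0 < a i ∧ 0 < a j ∧ 0 < a k) ∨
           (a i < 0 ∧ a j < 0 ∧ a k < 0) ∨
           (a i = 0 ∧ a j = 0 ∧ a k = 0)) := by
  obtain ⟨q, hfq, hneg⟩ := exists_fin_quadratic_factors hf 8 hdeg
  obtain ⟨i₀, hi₀⟩ := Finset.card_le_one_iff_subset_singleton.mp hneg
  have hb : ∀ i ∈ Finset.univ.erase i₀, 0 ≤ (q i).2 := fun i hi => not_lt.mp fun h =>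
    Finset.ne_of_mem_erase hi (Finset.mem_singleton.mp (hi₀ (by simp [h])))
  exact ⟨fun i => (q i).1, fun i => (q i).2, hfq, Finset.univ.erase i₀, by simp, hb,
    (Finset.univ.erase i₀).exists_three_of_same_sign (by simp) _⟩
end

section
/- Every monic real polynomial of degree 16 has a monic degree-6 divisor of one of the following forms: (a) t^6 + a5·t^5 + a4·t^4 + a3·t^3 + a2·t^2 + a1·t + a0 with a3/a5 > 0, or (b) (t^2 + b)(t^2 + c)(t^2 + d) for some reals b, c, d. -/
/-!
Over `ℝ` a monic polynomial of degree 16 is a product of eight monic quadratics `X² + aX + b`.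
Call such a factor admissible if `a = 0` or `b ≥ 0`. A quadratic without real roots has `b ≥ 0`,
and two real roots `r, s` give the factor `(X - r)(X - s)`, admissible unless `rs < 0`. Since no
three reals have pairwise negative products, all factors but one can be chosen admissible. By
pigeonhole three of the seven admissible factors have linear coefficients of the same sign. If the
sign is zero, their product is `(X² + b)(X² + c)(X² + d)`; otherwise its coefficients of `X⁵` and
`X³`, namely `a₁ + a₂ + a₃` and `a₁(b₂ + b₃) + a₂(b₁ + b₃) + a₃(b₁ + b₂) + a₁a₂a₃`, both have that
sign.
-/

open Polynomial Matrix
open scoped Classical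

def Admissible (p : ℝ × ℝ) : Prop := p.1 = 0 ∨ 0 ≤ p.2

lemma isMonicOfDegree_quadratic (p : ℝ × ℝ) : IsMonicOfDegree (quadratic p) 2 :=
  isMonicOfDegree_add_add_two p.1 p.2

lemma exists_eq_quadratic {g : ℝ[X]} (hg : IsMonicOfDegree g 2) : ∃ p, g = quadratic p := by
  obtain ⟨a, b, rfl⟩ := isMonicOfDegree_two_iff.1 hg
  exact ⟨(a, b), rfl⟩

lemma X_sub_C_mul_X_sub_C (r s : ℝ) : (X - C r) * (X - C s) = quadratic (-(r + s), r * s) := by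
  simp only [quadratic, C_neg, C_add, C_mul]
  ring

lemma admissible_of_forall_not_isRoot {p : ℝ × ℝ} (h : ∀ x, ¬ (quadratic p).IsRoot x) :
    Admissible p := by
  refine Or.inr (le_of_not_gt fun hp => ?_)
  obtain ⟨x, hx⟩ := exists_quadratic_eq_zero one_ne_zero
    ⟨√(discrim 1 p.1 p.2), (Real.mul_self_sqrt (by rw [discrim]; nlinarith [sq_nonneg p.1])).symm⟩
  exact h x (by simpa [quadratic, sq] using hx)

lemma exists_admissible_dvd_of_forall_not_isRoot {f : ℝ[X]} {n : ℕ}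
    (hf : IsMonicOfDegree f (n + 2)) (h : ∀ x, ¬ f.IsRoot x) :
    ∃ p, Admissible p ∧ quadratic p ∣ f := by
  obtain ⟨g, f', hg, -, rfl⟩ := hf.eq_isMonicOfDegree_two_mul_isMonicOfDegree
  obtain ⟨p, rfl⟩ := exists_eq_quadratic hg
  exact ⟨p, admissible_of_forall_not_isRoot fun x hx => h x (by simp_all), dvd_mul_right _ _⟩

lemma exists_eq_quadratic_mul_of_forall_not_dvd {f : ℝ[X]} {n : ℕ}
    (hf : IsMonicOfDegree f (n + 4)) (h : ∀ p, Admissible p → ¬ quadratic p ∣ f) :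
    ∃ p g, f = quadratic p * g ∧ IsMonicOfDegree g (n + 2) ∧ ∀ x, ¬ g.IsRoot x := by
  have exists_root {g : ℝ[X]} {m : ℕ} (hg : IsMonicOfDegree g (m + 2)) (hgf : g ∣ f) :
      ∃ x, g.IsRoot x := by
    by_contra! hg'
    obtain ⟨p, hp, hpg⟩ := exists_admissible_dvd_of_forall_not_isRoot hg hg'
    exact h p hp (hpg.trans hgf)
  obtain ⟨r, hr⟩ := exists_root hf dvd_rfl
  obtain ⟨f₁, hf₁⟩ := dvd_iff_isRoot.2 hr
  have hf₁d : IsMonicOfDegree f₁ (n + 3) :=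
    (isMonicOfDegree_X_sub_one r).of_mul_left (by rw [← hf₁, add_comm]; exact hf)
  obtain ⟨s, hs⟩ := exists_root hf₁d ⟨X - C r, by rw [hf₁]; ring⟩
  obtain ⟨g, hg⟩ := dvd_iff_isRoot.2 hs
  have hfg : f = (X - C r) * (X - C s) * g := by rw [hf₁, hg, mul_assoc]
  have hgd : IsMonicOfDegree g (n + 2) :=
    (isMonicOfDegree_X_sub_one s).of_mul_left (by rw [← hg, add_comm]; exact hf₁d)
  have root_mul_neg {a b : ℝ} (hab : (X - C a) * (X - C b) ∣ f) : a * b < 0 := by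
    by_contra! hab'
    exact h _ (Or.inr hab') (X_sub_C_mul_X_sub_C a b ▸ hab)
  refine ⟨(-(r + s), r * s), g, by rw [hfg, X_sub_C_mul_X_sub_C], hgd, fun t ht => ?_⟩
  obtain ⟨g', hg'⟩ := dvd_iff_isRoot.2 ht
  have hrs := root_mul_neg ⟨g, hfg⟩
  have hrt := root_mul_neg (a := r) (b := t) ⟨(X - C s) * g', by rw [hfg, hg']; ring⟩
  have hst := root_mul_neg (a := s) (b := t) ⟨(X - C r) * g', by rw [hfg, hg']; ring⟩
  nlinarith [mul_pos_of_neg_of_neg hrt hst, sq_nonneg t]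

theorem exists_eq_quadratic_mul_prod_admissible :
    ∀ {k : ℕ} {f : ℝ[X]}, IsMonicOfDegree f (2 * k + 2) →
      ∃ (p₀ : ℝ × ℝ) (p : Fin k → ℝ × ℝ),
        f = quadratic p₀ * ∏ i, quadratic (p i) ∧ ∀ i, Admissible (p i)
  | 0, f, hf => by
    obtain ⟨p₀, rfl⟩ := exists_eq_quadratic hf
    exact ⟨p₀, Fin.elim0, by simp, fun i => i.elim0⟩
  | k + 1, f, hf => by
    by_cases h : ∃ q, Admissible q ∧ quadratic q ∣ f
    · obtain ⟨q, hq, g, rfl⟩ := h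
      have hg : IsMonicOfDegree g (2 * k + 2) :=
        (isMonicOfDegree_quadratic q).of_mul_left (by rw [add_comm]; exact hf)
      obtain ⟨p₀, p, rfl, hp⟩ := exists_eq_quadratic_mul_prod_admissible hg
      refine ⟨p₀, Fin.cons q p, ?_, Fin.cases hq hp⟩
      rw [Fin.prod_univ_succ, Fin.cons_zero]
      simp only [Fin.cons_succ]
      ring
    · push Not at h
      obtain ⟨p₀, g, rfl, hg, hg'⟩ := exists_eq_quadratic_mul_of_forall_not_dvd (n := 2 * k) hf h
      obtain ⟨q₀, q, rfl, hq⟩ := exists_eq_quadratic_mul_prod_admissible hg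
      have hq₀ : Admissible q₀ := admissible_of_forall_not_isRoot fun x hx => hg' x (by simp_all)
      refine ⟨p₀, Fin.cons q₀ q, ?_, Fin.cases hq₀ hq⟩
      rw [Fin.prod_univ_succ, Fin.cons_zero]
      simp only [Fin.cons_succ]

lemma coeff_quadratic_mul_quadratic_mul_quadratic (p q r : ℝ × ℝ) :
    (quadratic p * quadratic q * quadratic r).coeff 5 = p.1 + q.1 + r.1 ∧
    (quadratic p * quadratic q * quadratic r).coeff 3 =
      p.1 * (q.2 + r.2) + q.1 * (p.2 + r.2) + r.1 * (p.2 + q.2) + p.1 * q.1 * r.1 := by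
  obtain ⟨a₁, b₁⟩ := p
  obtain ⟨a₂, b₂⟩ := q
  obtain ⟨a₃, b₃⟩ := r
  have expand : quadratic (a₁, b₁) * quadratic (a₂, b₂) * quadratic (a₃, b₃) =
      X ^ 6 + C (a₁ + a₂ + a₃) * X ^ 5 + C (b₁ + b₂ + b₃ + a₁ * a₂ + a₁ * a₃ + a₂ * a₃) * X ^ 4
        + C (a₁ * (b₂ + b₃) + a₂ * (b₁ + b₃) + a₃ * (b₁ + b₂) + a₁ * a₂ * a₃) * X ^ 3
        + C (b₁ * b₂ + b₁ * b₃ + b₂ * b₃ + a₁ * a₂ * b₃ + a₁ * a₃ * b₂ + a₂ * a₃ * b₁) * X ^ 2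
        + C (a₁ * b₂ * b₃ + a₂ * b₁ * b₃ + a₃ * b₁ * b₂) * X + C (b₁ * b₂ * b₃) := by
    simp only [quadratic, C_add, C_mul]
    ring
  rw [expand]
  constructor <;> simp only [coeff_add, coeff_C_mul, coeff_X_pow, coeff_C, coeff_X] <;> norm_num

lemma sextic_coeff_ratio_pos {a₁ a₂ a₃ b₁ b₂ b₃ : ℝ} (ha₁ : 0 < a₁) (ha₂ : 0 < a₂) (ha₃ : 0 < a₃)
    (hb₁ : 0 ≤ b₁) (hb₂ : 0 ≤ b₂) (hb₃ : 0 ≤ b₃) :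
    0 < (a₁ * (b₂ + b₃) + a₂ * (b₁ + b₃) + a₃ * (b₁ + b₂) + a₁ * a₂ * a₃) / (a₁ + a₂ + a₃) := by
  positivity

lemma coeff_three_div_coeff_five_pos_or_eq_even {s : SignType} {p q r : ℝ × ℝ}
    (hp : Admissible p) (hq : Admissible q) (hr : Admissible r)
    (hps : SignType.sign p.1 = s) (hqs : SignType.sign q.1 = s) (hrs : SignType.sign r.1 = s) :
    0 < (quadratic p * quadratic q * quadratic r).coeff 3 /
      (quadratic p * quadratic q * quadratic r).coeff 5 ∨
    ∃ b c d : ℝ,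
      quadratic p * quadratic q * quadratic r = (X ^ 2 + C b) * (X ^ 2 + C c) * (X ^ 2 + C d) := by
  obtain ⟨h5, h3⟩ := coeff_quadratic_mul_quadratic_mul_quadratic p q r
  rw [h5, h3]
  cases s with
  | zero =>
    simp only [SignType.zero_eq_zero, sign_eq_zero_iff] at hps hqs hrs
    exact Or.inr ⟨p.2, q.2, r.2, by simp [quadratic, hps, hqs, hrs]⟩
  | pos =>
    simp only [SignType.pos_eq_one, sign_eq_one_iff] at hps hqs hrs
    exact Or.inl <| sextic_coeff_ratio_pos hps hqs hrs (hp.resolve_left hps.ne')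
      (hq.resolve_left hqs.ne') (hr.resolve_left hrs.ne')
  | neg =>
    simp only [SignType.neg_eq_neg_one, sign_eq_neg_one_iff] at hps hqs hrs
    have := sextic_coeff_ratio_pos (neg_pos.2 hps) (neg_pos.2 hqs) (neg_pos.2 hrs)
      (hp.resolve_left hps.ne) (hq.resolve_left hqs.ne) (hr.resolve_left hrs.ne)
    rw [← neg_div_neg_eq]
    exact Or.inl (by convert this using 2 <;> ring)

lemma mul_mul_dvd_prod {ι M : Type*} [Fintype ι] [DecidableEq ι] [CommMonoid M] (g : ι → M)
    {i j k : ι} (hij : i ≠ j) (hik : i ≠ k) (hjk : j ≠ k) : g i * g j * g k ∣ ∏ x, g x := by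
  have : ∏ x ∈ {i, j, k}, g x = g i * g j * g k := by
    rw [Finset.prod_insert (by simp [hij, hik]), Finset.prod_pair hjk, mul_assoc]
  exact this ▸ Finset.prod_dvd_prod_of_subset _ _ g (Finset.subset_univ _)

theorem stmt_10 (f : ℝ[X]) (hf : f.Monic) (hdeg : f.natDegree = 16) :
    ∃ h : ℝ[X], h.Monic ∧ h.natDegree = 6 ∧ h ∣ f ∧
      (0 < h.coeff 3 / h.coeff 5 ∨
        ∃ b c d : ℝ, h = (X ^ 2 + C b) * (X ^ 2 + C c) * (X ^ 2 + C d)) := by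
  obtain ⟨p₀, p, rfl, hp⟩ := exists_eq_quadratic_mul_prod_admissible (k := 7) ⟨hdeg, hf⟩
  obtain ⟨s, hs⟩ := Fintype.exists_lt_card_fiber_of_mul_lt_card (fun i => SignType.sign (p i).1)
    (n := 2) (by decide)
  obtain ⟨i, hi, j, hj, k, hk, hij, hik, hjk⟩ := Finset.two_lt_card.1 hs
  simp only [Finset.mem_filter, Finset.mem_univ, true_and] at hi hj hk
  have hdeg6 := ((isMonicOfDegree_quadratic (p i)).mul (isMonicOfDegree_quadratic (p j))).mul
    (isMonicOfDegree_quadratic (p k))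
  exact ⟨_, hdeg6.monic, hdeg6.natDegree_eq,
    (mul_mul_dvd_prod (fun x => quadratic (p x)) hij hik hjk).trans (dvd_mul_left _ _),
    coeff_three_div_coeff_five_pos_or_eq_even (hp i) (hp j) (hp k) hi hj hk⟩
end

section
/- Let D be a 2×2 spectrally arbitrary sign pattern. Then the 8×8 sign pattern diag(T, D) is not spectrally arbitrary. In particular, the polynomial f = (t^2+t+1)(t^2-t+2)(t^2+1)(t^2-1) is not the characteristic polynomial of any real matrix with sign pattern diag(T, D). -/
open Polynomial Matrix
open scoped Classical

def IsSpectrallyArbitrary {m : Type*} [Fintype m] [DecidableEq m]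
    (P : Matrix m m ℝ) : Prop :=
  ∀ p : ℝ[X], p.Monic → p.natDegree = Fintype.card m →
    ∃ M : Matrix m m ℝ, hasSign P M ∧ M.charpoly = p

/-!
In a matrix `A` with sign pattern `T`, the only cycles of length at most 3 in the digraph of
`A` are the loops at 1 and 2 and the 2-cycles through {1, 2} and {5, 6}; hence the
coefficients of `X⁵` and `X³` in its characteristic polynomial are `-tr A` and
`a₅₆ a₆₅ tr A`, and as `a₅₆ a₆₅ ≠ 0` they vanish together. The 2×2 block contributes a monic
real quadratic factor `q` of `f = (X² + X + 1)(X² - X + 2)(X² + 1)(X² - 1)`. The three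
quadratics are irreducible over `ℝ`, so `q` is one of them or `X² - 1`, and in each of the
four cases exactly one of these two coefficients of `f / q` is zero.
-/

namespace hasSign

variable {m n : Type*}

lemma apply_ne_zero {P M : Matrix m m ℝ} (h : hasSign P M) {i j : m} (hij : P i j ≠ 0) :
    M i j ≠ 0 := fun h0 => hij (by rw [← h i j, h0, Real.sign_zero])

lemma apply_eq_zero_s12 {P M : Matrix m m ℝ} (h : hasSign P M) {i j : m} (hij : P i j = 0) :
    M i j = 0 :=
  Real.sign_eq_zero_iff.mp ((h i j).trans hij)

variable {P : Matrix m m ℝ} {Q : Matrix n n ℝ} {M : Matrix (m ⊕ n) (m ⊕ n) ℝ}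

lemma toBlocks₁₁ (h : hasSign (fromBlocks P 0 0 Q) M) : hasSign P M.toBlocks₁₁ :=
  fun i j => h (.inl i) (.inl j)

lemma eq_fromBlocks (h : hasSign (fromBlocks P 0 0 Q) M) :
    M = fromBlocks M.toBlocks₁₁ 0 0 M.toBlocks₂₂ := by
  ext (i | i) (j | j)
  · rfl
  · exact h.apply_eq_zero_s12 (fromBlocks_apply₁₂ P 0 0 Q i j)
  · exact h.apply_eq_zero_s12 (fromBlocks_apply₂₁ P 0 0 Q i j)
  · rfl

lemma charpoly_eq_charpoly_toBlocks₁₁_mul [Fintype m] [Fintype n] [DecidableEq m]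
    [DecidableEq n]
    (h : hasSign (fromBlocks P 0 0 Q) M) :
    M.charpoly = M.toBlocks₁₁.charpoly * M.toBlocks₂₂.charpoly := by
  rw [h.eq_fromBlocks, charpoly_fromBlocks_zero₂₁]
  rfl

end hasSign

set_option maxHeartbeats 1000000 in
lemma charpoly_patT_support (a b c d e f g h i j k l m n : ℝ) :
    (!![a, b, 0, 0, 0, 0; c, d, e, 0, 0, 0; 0, 0, 0, f, 0, 0; 0, 0, 0, 0, g, 0;
        l, m, 0, 0, 0, h; i, j, k, 0, n, 0] : Matrix (Fin 6) (Fin 6) ℝ).charpoly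
    = X ^ 6 - C (a + d) * X ^ 5 + C (a * d - b * c - h * n) * X ^ 4
      + C (h * n * (a + d)) * X ^ 3
      + C (-(a * d * h * n) + b * c * h * n - e * f * g * m - f * g * h * k) * X ^ 2
      + C (a * e * f * g * m + a * f * g * h * k - b * e * f * g * l + d * f * g * h * k
          - e * f * g * h * j) * X
      + C (-(a * d * f * g * h * k) + a * e * f * g * h * j + b * c * f * g * h * k
          - b * e * f * g * h * i) := by
  rw [Matrix.charpoly, Matrix.det_succ_row_zero]
  simp [Fin.sum_univ_succ, charmatrix_apply, Matrix.det_succ_row_zero, Fin.succAbove]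
  ring

lemma charpoly_coeff_three_of_patT_support {A : Matrix (Fin 6) (Fin 6) ℝ}
    (hA : ∀ i j, patT i j = 0 → A i j = 0) :
    A.charpoly.coeff 3 = -(A 4 5 * A 5 4) * A.charpoly.coeff 5 := by
  have hA_eq : A = !![A 0 0, A 0 1, 0, 0, 0, 0; A 1 0, A 1 1, A 1 2, 0, 0, 0;
      0, 0, 0, A 2 3, 0, 0; 0, 0, 0, 0, A 3 4, 0;
      A 4 0, A 4 1, 0, 0, 0, A 4 5; A 5 0, A 5 1, A 5 2, 0, A 5 4, 0] := by
    ext i j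
    fin_cases i <;> fin_cases j <;> first | rfl | exact hA _ _ (by simp [patT])
  rw [hA_eq, charpoly_patT_support]
  simp only [coeff_add, coeff_sub, coeff_C_mul_X_pow, coeff_C_mul_X, coeff_X_pow, coeff_C]
  simp
  ring

lemma charpoly_coeff_three_eq_zero_iff_of_hasSign_patT {A : Matrix (Fin 6) (Fin 6) ℝ}
    (hA : hasSign patT A) :
    A.charpoly.coeff 3 = 0 ↔ A.charpoly.coeff 5 = 0 := by
  have h45 : A 4 5 ≠ 0 := hA.apply_ne_zero (by simp [patT])
  have h54 : A 5 4 ≠ 0 := hA.apply_ne_zero (by simp [patT])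
  rw [charpoly_coeff_three_of_patT_support fun i j => hA.apply_eq_zero_s12]
  simp [h45, h54]

lemma Polynomial.eq_or_dvd_of_dvd_irreducible_mul {K : Type*} [Field K] {π q r : K[X]}
    (hπ : Irreducible π) (hπm : π.Monic) (hqm : q.Monic) (hdeg : q.natDegree ≤ π.natDegree)
    (h : q ∣ π * r) : q = π ∨ q ∣ r := by
  by_cases hdvd : π ∣ q
  · exact Or.inl (eq_of_monic_of_dvd_of_natDegree_le hπm hqm hdvd hdeg)
  · exact Or.inr ((hπ.coprime_iff_not_dvd.mpr hdvd).symm.dvd_of_dvd_mul_left h)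

lemma eq_of_monic_quadratic_dvd {q : ℝ[X]} (hq : q.Monic) (hdeg : q.natDegree = 2)
    (h : q ∣ (X ^ 2 + X + 1) * (X ^ 2 - X + 2) * (X ^ 2 + 1) * (X ^ 2 - 1)) :
    q = X ^ 2 + X + 1 ∨ q = X ^ 2 - X + 2 ∨ q = X ^ 2 + 1 ∨ q = X ^ 2 - 1 := by
  have step : ∀ {π r : ℝ[X]}, π.natDegree = 2 → (∀ x, 0 < π.eval x) → π.Monic →
      q ∣ π * r → q = π ∨ q ∣ r := fun hπd hπ hπm h =>
    eq_or_dvd_of_dvd_irreducible_mul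
      (irreducible_of_degree_le_three_of_not_isRoot (by simp [hπd]) fun x hx => (hπ x).ne' hx)
      hπm hq (by rw [hdeg, hπd]) h
  have hdvd : q ∣ (X ^ 2 + X + 1) * ((X ^ 2 - X + 2) * ((X ^ 2 + 1) * (X ^ 2 - 1))) := by
    convert h using 1
    ring
  rcases step (by compute_degree!) (fun x => by simp; nlinarith [sq_nonneg (x + 1 / 2)])
    (by monicity!) hdvd with h₁ | hdvd
  · exact Or.inl h₁
  rcases step (by compute_degree!) (fun x => by simp; nlinarith [sq_nonneg (x - 1 / 2)])
    (by monicity!) hdvd with h₂ | hdvd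
  · exact Or.inr (Or.inl h₂)
  rcases step (by compute_degree!) (fun x => by simp; positivity) (by monicity!) hdvd
    with h₃ | hdvd
  · exact Or.inr (Or.inr (Or.inl h₃))
  exact Or.inr (Or.inr (Or.inr (eq_of_monic_of_dvd_of_natDegree_le hq (by monicity!) hdvd
    (by rw [hdeg]; compute_degree!)).symm))

lemma mul_monic_quadratic_ne {p q : ℝ[X]} (hq : q.Monic) (hdeg : q.natDegree = 2)
    (hp : p.coeff 3 = 0 ↔ p.coeff 5 = 0) :
    p * q ≠ (X ^ 2 + X + 1) * (X ^ 2 - X + 2) * (X ^ 2 + 1) * (X ^ 2 - 1) := by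
  intro h
  have cofactor : ∀ g : ℝ[X], p * q = g * q → p = g := fun g hg =>
    mul_right_cancel₀ hq.ne_zero hg
  rcases eq_of_monic_quadratic_dvd hq hdeg (h ▸ dvd_mul_left q p) with rfl | rfl | rfl | rfl
  · rw [cofactor (X ^ 6 - X ^ 5 + 2 * X ^ 4 - X ^ 2 + X - 2) (by rw [h]; ring)] at hp
    simp [coeff_X_pow, coeff_X] at hp
  · rw [cofactor (X ^ 6 + X ^ 5 + X ^ 4 - X ^ 2 - X - 1) (by rw [h]; ring)] at hp
    simp [coeff_X_pow, coeff_X, coeff_one] at hp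
  · rw [cofactor (X ^ 6 + X ^ 4 + X ^ 3 - X - 2) (by rw [h]; ring)] at hp
    simp [coeff_X_pow, coeff_X] at hp
  · rw [cofactor (X ^ 6 + 3 * X ^ 4 + X ^ 3 + 4 * X ^ 2 + X + 2) (by rw [h]; ring)] at hp
    simp [coeff_X_pow, coeff_X] at hp

lemma charpoly_ne_of_hasSign_fromBlocks_patT {D : Matrix (Fin 2) (Fin 2) ℝ}
    {M : Matrix (Fin 6 ⊕ Fin 2) (Fin 6 ⊕ Fin 2) ℝ} (hM : hasSign (fromBlocks patT 0 0 D) M) :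
    M.charpoly ≠ (X ^ 2 + X + 1) * (X ^ 2 - X + 2) * (X ^ 2 + 1) * (X ^ 2 - 1) := by
  rw [hM.charpoly_eq_charpoly_toBlocks₁₁_mul]
  exact mul_monic_quadratic_ne (charpoly_monic _) (by simp [charpoly_natDegree_eq_dim])
    (charpoly_coeff_three_eq_zero_iff_of_hasSign_patT hM.toBlocks₁₁)

theorem stmt_12_general (D : Matrix (Fin 2) (Fin 2) ℝ) :
    ¬ IsSpectrallyArbitrary (Matrix.fromBlocks patT 0 0 D) ∧
    ∀ M : Matrix (Fin 6 ⊕ Fin 2) (Fin 6 ⊕ Fin 2) ℝ,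
      hasSign (Matrix.fromBlocks patT 0 0 D) M →
      M.charpoly ≠ (X ^ 2 + X + 1) * (X ^ 2 - X + 2) * (X ^ 2 + 1) * (X ^ 2 - 1) := by
  refine ⟨fun hSA => ?_, fun M => charpoly_ne_of_hasSign_fromBlocks_patT⟩
  obtain ⟨M, hM, hcharpoly⟩ :=
    hSA ((X ^ 2 + X + 1) * (X ^ 2 - X + 2) * (X ^ 2 + 1) * (X ^ 2 - 1)) (by monicity!)
      (by simp only [Fintype.card_sum, Fintype.card_fin]; compute_degree!)
  exact charpoly_ne_of_hasSign_fromBlocks_patT hM hcharpoly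

theorem stmt_12 (D : Matrix (Fin 2) (Fin 2) ℝ)
    (hDsign : ∀ i j, D i j = -1 ∨ D i j = 0 ∨ D i j = 1)
    (hDsa : IsSpectrallyArbitrary D) :
    ¬ IsSpectrallyArbitrary (Matrix.fromBlocks patT 0 0 D) ∧
    ∀ M : Matrix (Fin 6 ⊕ Fin 2) (Fin 6 ⊕ Fin 2) ℝ,
      hasSign (Matrix.fromBlocks patT 0 0 D) M →
      M.charpoly ≠ (X ^ 2 + X + 1) * (X ^ 2 - X + 2) * (X ^ 2 + 1) * (X ^ 2 - 1) :=
  stmt_12_general D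
end

section
/- No monic degree-6 divisor of f = (t^2+t+1)(t^2-t+2)(t^2+1)(t^2-1) has the property that its coefficients a3 (of t^3) and a5 (of t^5) satisfy: a3 = 0 if and only if a5 = 0, together with a3/a5 > 0 when both are nonzero. More precisely: every monic degree-6 divisor h = t^6 + a5·t^5 + ... of f in ℝ[t] fails the condition (a3 = 0 ↔ a5 = 0). -/
open Polynomial Matrix
open scoped Classical

/-!
The cofactor `c` of a monic sextic divisor `h` is a monic quadratic. If `c` is irreducible it is
prime, hence one of the four quadratic factors. Otherwise `c` has real roots, so it is coprime to
the first three factors, which have none, and therefore `c = t² - 1`. In each of the four cases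
`h` is the product of the remaining factors, and exactly one of its coefficients `a₃`, `a₅`
vanishes.
-/

namespace Polynomial

variable {K : Type*} [Field K] {c d q : K[X]}

theorem isCoprime_of_degree_eq_one_of_forall_not_isRoot (hd : d.degree = 1)
    (hq : ∀ x, ¬q.IsRoot x) : IsCoprime d q := by
  refine (irreducible_of_degree_eq_one hd).coprime_iff_not_dvd.2 fun hdq => ?_
  obtain ⟨x, hx⟩ := exists_root_of_degree_eq_one hd
  exact hq x (hx.dvd hdq)

theorem isCoprime_of_natDegree_eq_two_of_not_irreducible (hc : c.natDegree = 2)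
    (hirr : ¬Irreducible c) (hq : ∀ x, ¬q.IsRoot x) : IsCoprime c q := by
  obtain ⟨r, hr⟩ : ∃ r, c.IsRoot r := by
    by_contra! hroot
    exact hirr (irreducible_of_degree_le_three_of_not_isRoot (by simp [hc]) hroot)
  have hquot : (c /ₘ (X - C r)).degree = 1 := by
    rw [← Nat.cast_one, degree_eq_iff_natDegree_eq_of_pos one_pos]
    simp [natDegree_divByMonic _ (monic_X_sub_C r), hc]
  rw [← mul_divByMonic_eq_iff_isRoot.2 hr]
  exact .mul_left (isCoprime_of_degree_eq_one_of_forall_not_isRoot (degree_X_sub_C r) hq)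
    (isCoprime_of_degree_eq_one_of_forall_not_isRoot hquot hq)

end Polynomial

theorem eq_quadratic_factor_of_dvd {c : ℝ[X]} (hc : c.Monic) (hc2 : c.natDegree = 2)
    (hdvd : c ∣ (X ^ 2 + X + 1) * (X ^ 2 - X + 2) * (X ^ 2 + 1) * (X ^ 2 - 1)) :
    c = X ^ 2 + X + 1 ∨ c = X ^ 2 - X + 2 ∨ c = X ^ 2 + 1 ∨ c = X ^ 2 - 1 := by
  have eq_of_dvd {g : ℝ[X]} (hg : g.Monic) (hg2 : g.natDegree ≤ 2) (hcg : c ∣ g) : c = g :=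
    (eq_of_monic_of_dvd_of_natDegree_le hc hg hcg (hc2 ▸ hg2)).symm
  by_cases hirr : Irreducible c
  · simp only [hirr.prime.dvd_mul] at hdvd
    rcases hdvd with ((h | h) | h) | h
    · exact .inl (eq_of_dvd (by monicity!) (by compute_degree!) h)
    · exact .inr <| .inl (eq_of_dvd (by monicity!) (by compute_degree!) h)
    · exact .inr <| .inr <| .inl (eq_of_dvd (by monicity!) (by compute_degree!) h)
    · exact .inr <| .inr <| .inr (eq_of_dvd (by monicity!) (by compute_degree!) h)
  · have hq : ∀ x : ℝ, ¬((X ^ 2 + X + 1) * (X ^ 2 - X + 2) * (X ^ 2 + 1) : ℝ[X]).IsRoot x := by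
      intro x
      have h1 : 0 < x ^ 2 + x + 1 := by nlinarith [sq_nonneg (x + 1 / 2)]
      have h2 : 0 < x ^ 2 - x + 2 := by nlinarith [sq_nonneg (x - 1 / 2)]
      have h3 : 0 < x ^ 2 + 1 := by positivity
      simpa [IsRoot] using (mul_pos (mul_pos h1 h2) h3).ne'
    have hcop := isCoprime_of_natDegree_eq_two_of_not_irreducible hc2 hirr hq
    exact .inr <| .inr <| .inr (eq_of_dvd (by monicity!) (by compute_degree!)
      (hcop.dvd_of_dvd_mul_left hdvd))

theorem stmt_13 (h : ℝ[X]) (hm : h.Monic) (hdeg : h.natDegree = 6)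
    (hdvd : h ∣ (X ^ 2 + X + 1) * (X ^ 2 - X + 2) * (X ^ 2 + 1) * (X ^ 2 - 1)) :
    ¬ (h.coeff 3 = 0 ↔ h.coeff 5 = 0) := by
  obtain ⟨c, hc⟩ := hdvd
  have hfm : ((X ^ 2 + X + 1) * (X ^ 2 - X + 2) * (X ^ 2 + 1) * (X ^ 2 - 1) : ℝ[X]).Monic := by
    monicity!
  have hcm : c.Monic := hm.of_mul_monic_left (hc ▸ hfm)
  have hc2 : c.natDegree = 2 := by
    have hf8 : ((X ^ 2 + X + 1) * (X ^ 2 - X + 2) * (X ^ 2 + 1) * (X ^ 2 - 1) : ℝ[X]).natDegree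
        = 8 := by compute_degree!
    rw [hc, hm.natDegree_mul hcm, hdeg] at hf8
    omega
  have cofactor {g : ℝ[X]} (hg : h * c = g * c) : h = g := mul_right_cancel₀ hcm.ne_zero hg
  rcases eq_quadratic_factor_of_dvd hcm hc2 (Dvd.intro_left h hc.symm) with rfl | rfl | rfl | rfl
  · obtain rfl := cofactor (g := X ^ 6 - X ^ 5 + 2 * X ^ 4 - X ^ 2 + X - 2) <|
      hc.symm.trans (by ring)
    norm_num [coeff_X, coeff_one, coeff_X_pow]
  · obtain rfl := cofactor (g := X ^ 6 + X ^ 5 + X ^ 4 - X ^ 2 - X - 1) <|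
      hc.symm.trans (by ring)
    norm_num [coeff_X, coeff_one, coeff_X_pow]
  · obtain rfl := cofactor (g := X ^ 6 + X ^ 4 + X ^ 3 - X - 2) <|
      hc.symm.trans (by ring)
    norm_num [coeff_X, coeff_one, coeff_X_pow]
  · obtain rfl := cofactor (g := X ^ 6 + 3 * X ^ 4 + X ^ 3 + 4 * X ^ 2 + X + 2) <|
      hc.symm.trans (by ring)
    norm_num [coeff_X, coeff_one, coeff_X_pow]
end

section
/- For every tuple (m+, m-, m0, mi) of nonnegative integers with m+ + m- ≥ 3 and m+ + m- + m0 + 2mi = 6, at least one of the tuples (m+ - 3, m-, m0, mi), (m+, m- - 3, m0, mi), (m+ - 2, m- - 1, m0, mi), (m+ - 1, m- - 2, m0, mi) consists of nonnegative integers, and for sufficiently large N > 0, multiplying a monic cubic realizing that residual tuple by (t-N)^3, (t+N)^3, (t+3N)(t-N)^2, or (t-3N)(t+N)^2 respectively yields a monic degree-6 polynomial t^6 + a5·t^5 + a4·t^4 + a3·t^3 + a2·t^2 + a1·t + a0 with a3/a5 > 0 whose refined inertia is (m+, m-, m0, mi). -/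
open Polynomial Matrix
open scoped Classical

noncomputable def cRoots (p : ℝ[X]) : Multiset ℂ := (p.map (algebraMap ℝ ℂ)).roots

/-- `p` has `a` roots of positive real part, `b` of negative real part,
`c` zero roots and `2*d` nonzero purely imaginary roots (with multiplicity). -/
def polyRI (p : ℝ[X]) (a b c d : ℕ) : Prop :=
  (cRoots p).countP (fun z => 0 < z.re) = a ∧
  (cRoots p).countP (fun z => z.re < 0) = b ∧
  (cRoots p).count 0 = c ∧
  (cRoots p).countP (fun z => z.re = 0 ∧ z ≠ 0) = 2 * d

/-- refined inertia of a real square matrix. -/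
def matRI {m : Type*} [Fintype m] [DecidableEq m]
    (M : Matrix m m ℝ) (a b c d : ℕ) : Prop :=
  polyRI M.charpoly a b c d

/-- `p` is a monic degree-6 polynomial with `a3/a5 > 0` and refined inertia `(mp, mn, m0, mi)`. -/
def goodSix (p : ℝ[X]) (mp mn m0 mi : ℕ) : Prop :=
  p.Monic ∧ p.natDegree = 6 ∧ 0 < p.coeff 3 / p.coeff 5 ∧ polyRI p mp mn m0 mi

open Filter Topology

/-! Multiplying `h` by a cubic with real nonzero roots `r₁N, r₂N, r₃N` adds the sign counts of
these roots to the refined inertia. Writing `σ₁, σ₃` for the first and third elementary symmetric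
functions of the `rᵢ`, the product has `a₅ = -σ₁N + O(1)` and `a₃ = -σ₃N³ + O(N²)`; each of the
four cubics of the statement has `σ₁σ₃ > 0`, so `a₃ / a₅ > 0` once `N` is large. -/

lemma cRoots_mul {g h : ℝ[X]} (hg : g ≠ 0) (hh : h ≠ 0) :
    cRoots (g * h) = cRoots g + cRoots h := by
  have hinj := (algebraMap ℝ ℂ).injective
  rw [cRoots, Polynomial.map_mul, roots_mul (mul_ne_zero
    ((Polynomial.map_ne_zero_iff hinj).2 hg) ((Polynomial.map_ne_zero_iff hinj).2 hh))]
  rfl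

lemma polyRI_mul {g h : ℝ[X]} (hg : g ≠ 0) (hh : h ≠ 0) {a b c d a' b' c' d' : ℕ}
    (hgri : polyRI g a b c d) (hhri : polyRI h a' b' c' d') :
    polyRI (g * h) (a + a') (b + b') (c + c') (d + d') := by
  obtain ⟨hg₁, hg₂, hg₃, hg₄⟩ := hgri
  obtain ⟨hh₁, hh₂, hh₃, hh₄⟩ := hhri
  refine ⟨?_, ?_, ?_, ?_⟩ <;>
    simp only [cRoots_mul hg hh, Multiset.countP_add, Multiset.count_add, *, mul_add]

lemma polyRI_one : polyRI 1 0 0 0 0 := by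
  simp [polyRI, cRoots]

lemma polyRI_pow {p : ℝ[X]} (hp : p ≠ 0) {a b c d : ℕ} (hri : polyRI p a b c d) (n : ℕ) :
    polyRI (p ^ n) (n * a) (n * b) (n * c) (n * d) := by
  induction n with
  | zero => simpa using polyRI_one
  | succ n ih =>
    simpa only [pow_succ, add_mul, one_mul] using polyRI_mul (pow_ne_zero n hp) hp ih hri

lemma cRoots_X_sub_C (r : ℝ) : cRoots (X - C r) = {(r : ℂ)} := by
  simp [cRoots]

lemma polyRI_X_sub_C_of_pos {r : ℝ} (hr : 0 < r) : polyRI (X - C r) 1 0 0 0 := by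
  simp only [polyRI, cRoots_X_sub_C, ← Multiset.cons_zero, Multiset.countP_cons,
    Multiset.countP_zero, Multiset.count_cons, Multiset.count_zero]
  simp [hr, hr.ne', hr.not_gt, eq_comm (a := (0 : ℂ))]

lemma polyRI_X_sub_C_of_neg {r : ℝ} (hr : r < 0) : polyRI (X - C r) 0 1 0 0 := by
  simp only [polyRI, cRoots_X_sub_C, ← Multiset.cons_zero, Multiset.countP_cons,
    Multiset.countP_zero, Multiset.count_cons, Multiset.count_zero]
  simp [hr, hr.ne, hr.not_gt, eq_comm (a := (0 : ℂ))]

lemma polyRI_X_add_C_of_pos {r : ℝ} (hr : 0 < r) : polyRI (X + C r) 0 1 0 0 := by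
  simpa using polyRI_X_sub_C_of_neg (neg_neg_of_pos hr)

lemma eventually_pos_cubic_div_linear {a₀ a₁ a₂ a₃ b₀ b₁ : ℝ} (h : 0 < a₃ * b₁) :
    ∀ᶠ x in atTop, 0 < (a₃ * x ^ 3 + a₂ * x ^ 2 + a₁ * x + a₀) / (b₁ * x + b₀) := by
  set φ : ℝ → ℝ := fun t ↦ (a₃ + a₂ * t + a₁ * t ^ 2 + a₀ * t ^ 3) * (b₁ + b₀ * t)
  have hφ : Tendsto (fun x ↦ φ x⁻¹) atTop (𝓝 (φ 0)) :=
    ((show Continuous φ by fun_prop).tendsto 0).comp tendsto_inv_atTop_zero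
  have hφ₀ : 0 < φ 0 := by simpa [φ] using h
  filter_upwards [hφ.eventually_const_lt hφ₀, eventually_gt_atTop 0] with x hφx hx
  have hprod : (a₃ * x ^ 3 + a₂ * x ^ 2 + a₁ * x + a₀) * (b₁ * x + b₀) = x ^ 4 * φ x⁻¹ := by
    simp only [φ]
    field_simp
  exact div_pos_iff.2 (mul_pos_iff.1 (hprod ▸ mul_pos (pow_pos hx 4) hφx))

lemma X_sub_C_mul_X_sub_C_mul_X_sub_C {R : Type*} [CommRing R] (a b c : R) :
    (X - C a) * (X - C b) * (X - C c) =
      X ^ 3 + C (-(a + b + c)) * X ^ 2 + C (a * b + b * c + c * a) * X + C (-(a * b * c)) := by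
  simp only [map_neg, map_add, map_mul]
  ring

lemma coeff_monic_cubic_mul {R : Type*} [CommSemiring R] (c₂ c₁ c₀ : R) {h : R[X]}
    (hh : h.Monic) (hhd : h.natDegree = 3) :
    ((X ^ 3 + C c₂ * X ^ 2 + C c₁ * X + C c₀) * h).coeff 5 = c₂ + h.coeff 2 ∧
      ((X ^ 3 + C c₂ * X ^ 2 + C c₁ * X + C c₀) * h).coeff 3 =
        c₀ + c₁ * h.coeff 2 + c₂ * h.coeff 1 + h.coeff 0 := by
  have h₃ : h.coeff 3 = 1 := hhd ▸ hh.coeff_natDegree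
  have h₄ : h.coeff 4 = 0 := coeff_eq_zero_of_natDegree_lt (by omega)
  have h₅ : h.coeff 5 = 0 := coeff_eq_zero_of_natDegree_lt (by omega)
  simp only [add_mul, mul_assoc, coeff_add, coeff_X_pow_mul', coeff_C_mul, coeff_X_mul, h₃, h₄,
    h₅, Nat.reduceLeDiff, ↓reduceIte, Nat.reduceSub, mul_one, mul_zero, add_zero, le_refl,
    tsub_self]
  constructor <;> ring

lemma eventually_pos_coeff_three_div_coeff_five {r₁ r₂ r₃ : ℝ}
    (hr : 0 < (r₁ + r₂ + r₃) * (r₁ * r₂ * r₃)) {h : ℝ[X]} (hh : h.Monic) (hhd : h.natDegree = 3) :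
    ∀ᶠ N in atTop,
      0 < ((X - C (r₁ * N)) * (X - C (r₂ * N)) * (X - C (r₃ * N)) * h).coeff 3 /
        ((X - C (r₁ * N)) * (X - C (r₂ * N)) * (X - C (r₃ * N)) * h).coeff 5 := by
  filter_upwards [eventually_pos_cubic_div_linear (a₃ := -(r₁ * r₂ * r₃))
    (a₂ := (r₁ * r₂ + r₂ * r₃ + r₃ * r₁) * h.coeff 2) (a₁ := -(r₁ + r₂ + r₃) * h.coeff 1)
    (a₀ := h.coeff 0) (b₁ := -(r₁ + r₂ + r₃)) (b₀ := h.coeff 2)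
    (by rwa [neg_mul_neg, mul_comm])] with N hN
  obtain ⟨h₅, h₃⟩ := coeff_monic_cubic_mul _ _ _ hh hhd
  rw [X_sub_C_mul_X_sub_C_mul_X_sub_C, h₅, h₃]
  convert hN using 2 <;> ring

lemma exists_goodSix_of_scaled_roots {r₁ r₂ r₃ : ℝ} (hr : 0 < (r₁ + r₂ + r₃) * (r₁ * r₂ * r₃))
    {g : ℝ → ℝ[X]} (hg : ∀ N, g N = (X - C (r₁ * N)) * (X - C (r₂ * N)) * (X - C (r₃ * N)))
    {p n : ℕ} (hgri : ∀ N, 0 < N → polyRI (g N) p n 0 0)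
    {h : ℝ[X]} (hh : h.Monic) (hhd : h.natDegree = 3) {a b m0 mi mp mn : ℕ}
    (hri : polyRI h a b m0 mi) (hp : p + a = mp) (hn : n + b = mn) :
    ∃ N₀ : ℝ, 0 < N₀ ∧ ∀ N : ℝ, N₀ < N → goodSix (g N * h) mp mn m0 mi := by
  have hgm : ∀ N, (g N).Monic := fun N ↦ hg N ▸
    ((monic_X_sub_C _).mul (monic_X_sub_C _)).mul (monic_X_sub_C _)
  have hgd : ∀ N, (g N).natDegree = 3 := fun N ↦ by
    rw [hg N]
    compute_degree!
  obtain ⟨N₁, hN₁⟩ := eventually_atTop.1 (eventually_pos_coeff_three_div_coeff_five hr hh hhd)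
  refine ⟨max N₁ 1, by positivity, fun N hN ↦ ⟨(hgm N).mul hh, ?_, ?_, ?_⟩⟩
  · rw [(hgm N).natDegree_mul hh, hgd, hhd]
  · exact hg N ▸ hN₁ N (max_lt_iff.1 hN).1.le
  · have hN : 0 < N := one_pos.trans (max_lt_iff.1 hN).2
    simpa only [hp, hn, zero_add] using polyRI_mul (hgm N).ne_zero hh.ne_zero (hgri N hN) hri

theorem stmt_19_general (mp mn m0 mi : ℕ) (h3 : 3 ≤ mp + mn) :
    (3 ≤ mp ∨ 3 ≤ mn ∨ (2 ≤ mp ∧ 1 ≤ mn) ∨ (1 ≤ mp ∧ 2 ≤ mn)) ∧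
    (3 ≤ mp → ∀ h : ℝ[X], h.Monic → h.natDegree = 3 → polyRI h (mp - 3) mn m0 mi →
      ∃ N0 : ℝ, 0 < N0 ∧ ∀ N : ℝ, N0 < N →
        goodSix ((X - C N) ^ 3 * h) mp mn m0 mi) ∧
    (3 ≤ mn → ∀ h : ℝ[X], h.Monic → h.natDegree = 3 → polyRI h mp (mn - 3) m0 mi →
      ∃ N0 : ℝ, 0 < N0 ∧ ∀ N : ℝ, N0 < N →
        goodSix ((X + C N) ^ 3 * h) mp mn m0 mi) ∧
    (2 ≤ mp ∧ 1 ≤ mn → ∀ h : ℝ[X], h.Monic → h.natDegree = 3 →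
      polyRI h (mp - 2) (mn - 1) m0 mi →
      ∃ N0 : ℝ, 0 < N0 ∧ ∀ N : ℝ, N0 < N →
        goodSix ((X + C (3 * N)) * (X - C N) ^ 2 * h) mp mn m0 mi) ∧
    (1 ≤ mp ∧ 2 ≤ mn → ∀ h : ℝ[X], h.Monic → h.natDegree = 3 →
      polyRI h (mp - 1) (mn - 2) m0 mi →
      ∃ N0 : ℝ, 0 < N0 ∧ ∀ N : ℝ, N0 < N →
        goodSix ((X - C (3 * N)) * (X + C N) ^ 2 * h) mp mn m0 mi) := by
  refine ⟨by omega, ?_, ?_, ?_, ?_⟩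
  · intro hmp h hh hhd hri
    exact exists_goodSix_of_scaled_roots (r₁ := 1) (r₂ := 1) (r₃ := 1) (by norm_num)
      (fun N ↦ by simp only [one_mul]; ring)
      (fun N hN ↦ polyRI_pow (X_sub_C_ne_zero N) (polyRI_X_sub_C_of_pos hN) 3)
      hh hhd hri (by omega) (by omega)
  · intro hmn h hh hhd hri
    exact exists_goodSix_of_scaled_roots (r₁ := -1) (r₂ := -1) (r₃ := -1) (by norm_num)
      (fun N ↦ by simp only [neg_one_mul, map_neg]; ring)
      (fun N hN ↦ polyRI_pow (X_add_C_ne_zero N) (polyRI_X_add_C_of_pos hN) 3)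
      hh hhd hri (by omega) (by omega)
  · rintro ⟨hmp, hmn⟩ h hh hhd hri
    exact exists_goodSix_of_scaled_roots (r₁ := -3) (r₂ := 1) (r₃ := 1) (by norm_num)
      (fun N ↦ by simp only [one_mul, neg_mul, map_neg]; ring)
      (fun N hN ↦ polyRI_mul (X_add_C_ne_zero _) (pow_ne_zero 2 (X_sub_C_ne_zero N))
        (polyRI_X_add_C_of_pos (by positivity : 0 < 3 * N))
        (polyRI_pow (X_sub_C_ne_zero N) (polyRI_X_sub_C_of_pos hN) 2))
      hh hhd hri (by omega) (by omega)
  · rintro ⟨hmp, hmn⟩ h hh hhd hri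
    exact exists_goodSix_of_scaled_roots (r₁ := 3) (r₂ := -1) (r₃ := -1) (by norm_num)
      (fun N ↦ by simp only [neg_one_mul, map_neg]; ring)
      (fun N hN ↦ polyRI_mul (X_sub_C_ne_zero _) (pow_ne_zero 2 (X_add_C_ne_zero N))
        (polyRI_X_sub_C_of_pos (by positivity : 0 < 3 * N))
        (polyRI_pow (X_add_C_ne_zero N) (polyRI_X_add_C_of_pos hN) 2))
      hh hhd hri (by omega) (by omega)

theorem stmt_19 (mp mn m0 mi : ℕ) (h3 : 3 ≤ mp + mn)
    (hsum : mp + mn + m0 + 2 * mi = 6) :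
    (3 ≤ mp ∨ 3 ≤ mn ∨ (2 ≤ mp ∧ 1 ≤ mn) ∨ (1 ≤ mp ∧ 2 ≤ mn)) ∧
    (3 ≤ mp → ∀ h : ℝ[X], h.Monic → h.natDegree = 3 → polyRI h (mp - 3) mn m0 mi →
      ∃ N0 : ℝ, 0 < N0 ∧ ∀ N : ℝ, N0 < N →
        goodSix ((X - C N) ^ 3 * h) mp mn m0 mi) ∧
    (3 ≤ mn → ∀ h : ℝ[X], h.Monic → h.natDegree = 3 → polyRI h mp (mn - 3) m0 mi →
      ∃ N0 : ℝ, 0 < N0 ∧ ∀ N : ℝ, N0 < N →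
        goodSix ((X + C N) ^ 3 * h) mp mn m0 mi) ∧
    (2 ≤ mp ∧ 1 ≤ mn → ∀ h : ℝ[X], h.Monic → h.natDegree = 3 →
      polyRI h (mp - 2) (mn - 1) m0 mi →
      ∃ N0 : ℝ, 0 < N0 ∧ ∀ N : ℝ, N0 < N →
        goodSix ((X + C (3 * N)) * (X - C N) ^ 2 * h) mp mn m0 mi) ∧
    (1 ≤ mp ∧ 2 ≤ mn → ∀ h : ℝ[X], h.Monic → h.natDegree = 3 →
      polyRI h (mp - 1) (mn - 2) m0 mi →
      ∃ N0 : ℝ, 0 < N0 ∧ ∀ N : ℝ, N0 < N →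
        goodSix ((X - C (3 * N)) * (X + C N) ^ 2 * h) mp mn m0 mi) :=
  stmt_19_general mp mn m0 mi h3
end
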